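/- arXiv:2102.13093 — 6 statements merged into one kernel-verified Lean document; each statement's English description precedes it below -/
import Mathlib

section
/- Let (u,m) ∈ C³(Q̄_T) × C²(Q̄_T) be a classical solution of the EMFG system and let K > 0 satisfy ‖Du‖_{C⁰(Q̄_T)} ≤ K. Define δ_K = inf{ H⁻¹(x,p,s) : x ∈ 𝕋^d, p ∈ ℝ^d, s ≤ K }, where H⁻¹(x,p,·) denotes the inverse of the strictly decreasing bijection m ↦ H(x,p,m) of (0,∞) onto ℝ, and define h(s) = sup{ m > 0 : sup_{(x,p)} ( H(x,p,m) − C₀ψ(m)|p|^γ ) ≥ −s }. Then δ_K > 0, and for every (x,t) ∈ Q̄_T one has δ_K ≤ m(x,t) ≤ h( K + C₀ K^γ · sup_{[δ_K,∞)} ψ ). In particular ‖m‖_{C⁰(Q̄_T)} + ‖1/m‖_{C⁰(Q̄_T)} is bounded by a constant depending only on C₀, K, δ_K⁻¹, sup_{[δ_K,∞)} ψ, and h. -/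
open Set Function MeasureTheory Filter
open scoped Topology

noncomputable section

/-- `Ed d` is the ambient Euclidean space `ℝ^d`; the flat torus `𝕋^d` is modeled by
`ℤ^d`-periodic functions on `Ed d`. -/
abbrev Ed (d : ℕ) := EuclideanSpace ℝ (Fin d)

namespace EMFG

variable {d : ℕ}

/-- Euclidean scalar product. -/
def dotE {d : ℕ} (u v : Ed d) : ℝ := inner ℝ u v

/-- Periodicity with respect to the standard integer lattice: a function on `ℝ^d`
descends to the torus `𝕋^d`. -/
def XPeriodic {α : Type*} (f : Ed d → α) : Prop :=
  ∀ (x : Ed d) (i : Fin d), f (x + EuclideanSpace.single i (1:ℝ)) = f x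

/-! Partial derivatives of a scalar Hamiltonian `H = H(x,p,m)`. -/

/-- `H_m` -/
def dm (H : Ed d → Ed d → ℝ → ℝ) (x p : Ed d) (m : ℝ) : ℝ :=
  deriv (fun m' => H x p m') m

/-- `H_{mm}` -/
def dmm (H : Ed d → Ed d → ℝ → ℝ) (x p : Ed d) (m : ℝ) : ℝ :=
  deriv (fun m' => dm H x p m') m

/-- `D_p H` (as a vector). -/
def gradp (H : Ed d → Ed d → ℝ → ℝ) (x p : Ed d) (m : ℝ) : Ed d :=
  gradient (fun p' => H x p' m) p

/-- `D_x H` (as a vector). -/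
def gradx (H : Ed d → Ed d → ℝ → ℝ) (x p : Ed d) (m : ℝ) : Ed d :=
  gradient (fun x' => H x' p m) x

/-- `D²_{pp} H` -/
def hesspp (H : Ed d → Ed d → ℝ → ℝ) (x p : Ed d) (m : ℝ) : Ed d →L[ℝ] Ed d :=
  fderiv ℝ (fun p' => gradp H x p' m) p

/-- `D²_{xx} H` -/
def hessxx (H : Ed d → Ed d → ℝ → ℝ) (x p : Ed d) (m : ℝ) : Ed d →L[ℝ] Ed d :=
  fderiv ℝ (fun x' => gradx H x' p m) x

/-- `D²_{xp} H` -/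
def hessxp (H : Ed d → Ed d → ℝ → ℝ) (x p : Ed d) (m : ℝ) : Ed d →L[ℝ] Ed d :=
  fderiv ℝ (fun x' => gradp H x' p m) x

/-- `D_p H_m` -/
def gradpdm (H : Ed d → Ed d → ℝ → ℝ) (x p : Ed d) (m : ℝ) : Ed d :=
  gradient (fun p' => dm H x p' m) p

/-- `D_x H_m` -/
def gradxdm (H : Ed d → Ed d → ℝ → ℝ) (x p : Ed d) (m : ℝ) : Ed d :=
  gradient (fun x' => dm H x' p m) x

/-! Partial derivatives of a vector field `B = B(x,p,m) ∈ ℝ^d`. -/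

/-- `B_m` -/
def vdm (B : Ed d → Ed d → ℝ → Ed d) (x p : Ed d) (m : ℝ) : Ed d :=
  deriv (fun m' => B x p m') m

/-- `B_{mm}` -/
def vdmm (B : Ed d → Ed d → ℝ → Ed d) (x p : Ed d) (m : ℝ) : Ed d :=
  deriv (fun m' => vdm B x p m') m

/-- `D_p B` -/
def jacp (B : Ed d → Ed d → ℝ → Ed d) (x p : Ed d) (m : ℝ) : Ed d →L[ℝ] Ed d :=
  fderiv ℝ (fun p' => B x p' m) p

/-- `D_x B` -/
def jacx (B : Ed d → Ed d → ℝ → Ed d) (x p : Ed d) (m : ℝ) : Ed d →L[ℝ] Ed d :=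
  fderiv ℝ (fun x' => B x' p m) x

/-- `D_p B_m` -/
def jacpdm (B : Ed d → Ed d → ℝ → Ed d) (x p : Ed d) (m : ℝ) : Ed d →L[ℝ] Ed d :=
  fderiv ℝ (fun p' => vdm B x p' m) p

/-- `D_x B_m` -/
def jacxdm (B : Ed d → Ed d → ℝ → Ed d) (x p : Ed d) (m : ℝ) : Ed d →L[ℝ] Ed d :=
  fderiv ℝ (fun x' => vdm B x' p m) x

/-- `D²_{pp} B` -/
def hessppB (B : Ed d → Ed d → ℝ → Ed d) (x p : Ed d) (m : ℝ) :
    Ed d →L[ℝ] Ed d →L[ℝ] Ed d :=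
  fderiv ℝ (fun p' => jacp B x p' m) p

/-- `D²_{xx} B` -/
def hessxxB (B : Ed d → Ed d → ℝ → Ed d) (x p : Ed d) (m : ℝ) :
    Ed d →L[ℝ] Ed d →L[ℝ] Ed d :=
  fderiv ℝ (fun x' => jacx B x' p m) x

/-- `D²_{xp} B` -/
def hessxpB (B : Ed d → Ed d → ℝ → Ed d) (x p : Ed d) (m : ℝ) :
    Ed d →L[ℝ] Ed d →L[ℝ] Ed d :=
  fderiv ℝ (fun x' => jacp B x' p m) x

/-- `div_x B` (at frozen `p`, `m`). -/
def divx (B : Ed d → Ed d → ℝ → Ed d) (x p : Ed d) (m : ℝ) : ℝ :=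
  ∑ i, (jacx B x p m (EuclideanSpace.single i (1:ℝ))) i

/-- The time derivative `u_t`, taken within the time interval `[0,T]`. -/
def tderiv (T : ℝ) (u : Ed d → ℝ → ℝ) (x : Ed d) (t : ℝ) : ℝ :=
  derivWithin (u x) (Icc 0 T) t

/-- The spatial gradient `D_x u`. -/
def sgrad (u : Ed d → ℝ → ℝ) (x : Ed d) (t : ℝ) : Ed d :=
  gradient (fun x' => u x' t) x

/-- The closed cylinder `Q̄_T = 𝕋^d × [0,T]` (lifted to `ℝ^d × [0,T]`). -/
def QTbar (d : ℕ) (T : ℝ) : Set (Ed d × ℝ) := univ ×ˢ Icc 0 T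

/-- `u ∈ C^n(Q̄_T)`. -/
def RegOn (n : ℕ) (T : ℝ) (u : Ed d → ℝ → ℝ) : Prop :=
  ContDiffOn ℝ n (fun z : Ed d × ℝ => u z.1 z.2) (QTbar d T)

/-- `u ∈ C^{k,s}(Q̄_T)`: `k` times continuously differentiable with `s`-Hölder
continuous `k`-th order derivatives. -/
def HolderRegOn (k : ℕ) (s T : ℝ) (u : Ed d → ℝ → ℝ) : Prop :=
  RegOn k T u ∧ ∃ C : NNReal,
    HolderOnWith C s.toNNReal
      (iteratedFDerivWithin ℝ k (fun z : Ed d × ℝ => u z.1 z.2) (QTbar d T)) (QTbar d T)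

/-- The full data and standing assumptions (M), (H), (B), (G), (E) of the paper,
together with the normalizations of Remark 2.1. -/
structure Setup (d : ℕ) where
  /-- the time horizon -/
  T : ℝ
  T_pos : 0 < T
  /-- the structural constant `C₀` -/
  C₀ : ℝ
  C₀_pos : 0 < C₀
  /-- growth exponents -/
  γ : ℝ
  γ₁ : ℝ
  γ₂ : ℝ
  hγ : 1 < γ
  hγ₁ : 0 ≤ γ₁
  hγ₂₁ : γ₂ ≤ γ₁
  hγ₁γ : γ₁ ≤ γ
  hγ₂ : γ₂ < 2 * γ₁ - γ + 2
  /-- the structural functions `C̄` and `ψ` on `(0,∞)` -/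
  Cb : ℝ → ℝ
  ψ : ℝ → ℝ
  Cb_pos : ∀ m : ℝ, 0 < m → 0 < Cb m
  ψ_pos : ∀ m : ℝ, 0 < m → 0 < ψ m
  Cb_cont : ContinuousOn Cb (Ioi 0)
  ψ_cont : ContinuousOn ψ (Ioi 0)
  ψ_mono : ∀ m₁ m₂ : ℝ, 0 < m₁ → m₁ ≤ m₂ → ψ m₂ ≤ ψ m₁
  ψ_lim : γ₁ < γ → ∃ ℓ : ℝ, 0 < ℓ ∧ Tendsto ψ atTop (𝓝 ℓ)
  /-- the initial density -/
  m₀ : Ed d → ℝ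
  m₀_per : XPeriodic m₀
  m₀_smooth : ContDiff ℝ 4 m₀
  m₀_pos : ∀ x, 0 < m₀ x
  m₀_int : ∫ x in {x : Ed d | ∀ i, x i ∈ Icc (0:ℝ) 1}, m₀ x = 1
  /-- the Hamiltonian -/
  H : Ed d → Ed d → ℝ → ℝ
  H_per : ∀ (p : Ed d) (m : ℝ), XPeriodic (fun x => H x p m)
  H_smooth : ContDiffOn ℝ 4 (fun z : Ed d × Ed d × ℝ => H z.1 z.2.1 z.2.2)
      (univ ×ˢ univ ×ˢ Ioi 0)
  Hm_neg : ∀ (x p : Ed d) (m : ℝ), 0 < m → dm H x p m < 0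
  H1 : ∀ (x p : Ed d) (m : ℝ), 0 < m → ∀ ξ : Ed d,
      C₀⁻¹ * ψ m * (1 + ‖p‖) ^ (γ - 2) * ‖ξ‖ ^ 2 ≤ dotE (hesspp H x p m ξ) ξ ∧
      dotE (hesspp H x p m ξ) ξ ≤ C₀ * ψ m * (1 + ‖p‖) ^ (γ - 2) * ‖ξ‖ ^ 2
  H2a : ∀ (x p : Ed d) (m : ℝ), 0 < m →
      ‖gradp H x p m‖ ≤ C₀ * ψ m * (1 + ‖p‖) ^ (γ - 1)
  H2b : ∀ (x p : Ed d) (m : ℝ), 0 < m →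
      (1 + C₀⁻¹) * H x p m - Cb m ≤ dotE (gradp H x p m) p
  HM1 : ∀ (x p : Ed d) (m : ℝ), 0 < m →
      C₀⁻¹ * ψ m * ‖p‖ ^ γ₁ ≤ -(m * dm H x p m) ∧
      -(m * dm H x p m) ≤ C₀ * ψ m * ‖p‖ ^ γ₁ + Cb m
  HM2 : ∀ (x p : Ed d) (m : ℝ), 0 < m →
      |m * dmm H x p m| ≤ -(C₀ * dm H x p m) ∧
      ‖p‖ * ‖gradpdm H x p m‖ ≤ -(C₀ * dm H x p m)
  HX1 : ∀ (x p : Ed d) (m : ℝ), 0 < m →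
      ‖gradx H x p m‖ ≤ C₀ * ψ m * (1 + ‖p‖) ^ γ₂ ∧
      ‖hessxx H x p m‖ ≤ C₀ * ψ m * (1 + ‖p‖) ^ γ₂ ∧
      ‖hessxp H x p m‖ ≤ C₀ * ψ m * (1 + ‖p‖) ^ (γ₂ - 1)
  HX2 : ∀ (x p : Ed d) (m : ℝ), 0 < m →
      m * ‖gradxdm H x p m‖ ≤ C₀ * ψ m * (1 + ‖p‖) ^ γ₂
  HX3 : ∀ (x : Ed d) (m : ℝ), 0 < m → ‖gradx H x 0 m‖ ≤ C₀
  /-- the drift vector field -/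
  B : Ed d → Ed d → ℝ → Ed d
  B_per : ∀ (p : Ed d) (m : ℝ), XPeriodic (fun x => B x p m)
  B_smooth : ContDiffOn ℝ 4 (fun z : Ed d × Ed d × ℝ => B z.1 z.2.1 z.2.2)
      (univ ×ˢ univ ×ˢ Ici 0)
  B_zero : ∀ x p : Ed d, B x p 0 = 0
  B1 : ∀ (x p : Ed d) (m : ℝ), 0 < m → ∀ ξ : Ed d,
      C₀⁻¹ * m * ψ m * ‖p‖ ^ (γ - 2) * ‖ξ‖ ^ 2 ≤ dotE (jacp B x p m ξ) ξ ∧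
      dotE (jacp B x p m ξ) ξ ≤ C₀ * m * ψ m * (1 + ‖p‖) ^ (γ - 2) * ‖ξ‖ ^ 2
  B2 : ∀ (x p : Ed d) (m : ℝ), 0 < m →
      ‖vdm B x p m‖ ≤ C₀ * ψ m * (1 + ‖p‖) ^ (γ - 1) ∧
      ‖jacpdm B x p m‖ ≤ C₀ * ψ m * (1 + ‖p‖) ^ (γ - 2) ∧
      ‖hessppB B x p m‖ ≤ C₀ * m * ψ m * (1 + ‖p‖) ^ (γ - 3)
  BM : ∀ (x p : Ed d) (m : ℝ), 0 < m →
      ‖vdmm B x p m‖ ≤ -(C₀ * (1 + ‖p‖) * dm H x p m)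
  BX1 : ∀ (x p : Ed d) (m : ℝ), 0 < m →
      ‖jacx B x p m‖ ≤ C₀ * m * ψ m * (1 + ‖p‖) ^ (γ₂ - 1) ∧
      ‖hessxxB B x p m‖ ≤ C₀ * m * ψ m * (1 + ‖p‖) ^ (γ₂ - 1) ∧
      ‖jacxdm B x p m‖ ≤ C₀ * ψ m * (1 + ‖p‖) ^ (γ₂ - 1)
  BX2 : ∀ (x p : Ed d) (m : ℝ), 0 < m →
      ‖hessxpB B x p m‖ ≤ C₀ * m * ψ m * (1 + ‖p‖) ^ (γ₂ - 2)
  BX3 : ∀ (x : Ed d) (m : ℝ), 0 < m → ‖jacx B x 0 m‖ ≤ C₀ * m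
  /-- the terminal coupling -/
  g : Ed d → ℝ → ℝ
  g_per : ∀ m : ℝ, XPeriodic (fun x => g x m)
  g_smooth : ContDiffOn ℝ 4 (fun z : Ed d × ℝ => g z.1 z.2) (univ ×ˢ Ioi 0)
  gm_pos : ∀ (x : Ed d) (m : ℝ), 0 < m → 0 < deriv (g x) m
  /-- `sup g` and `inf g`: the common limits of `g(x,·)` at `∞` and `0⁺` (assumption (G)) -/
  gSup : ℝ
  gInf : ℝ
  g_lim_top : ∀ x : Ed d, Tendsto (g x) atTop (𝓝 gSup)
  g_lim_bot : ∀ x : Ed d, Tendsto (g x) (𝓝[>] 0) (𝓝 gInf)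
  /-- (E1) -/
  E1 : ∀ M : ℝ, ∃ δ : ℝ, 0 < δ ∧ ∀ (x p : Ed d) (m : ℝ), 0 < m → m < δ → M ≤ H x p m
  /-- (E2) -/
  E2 : ∀ M : ℝ, ∃ R : ℝ, ∀ (x p : Ed d) (m : ℝ), 0 < m → R ≤ m →
      H x p m - C₀ * ψ m * ‖p‖ ^ γ ≤ -M
  /-- (E3), strict form of the uniqueness condition -/
  E3 : ∀ (x p : Ed d) (m : ℝ), 0 < m → ∀ ξ : Ed d, ξ ≠ 0 →
      (1 + C₀⁻¹) * (dotE (vdm B x p m - gradp H x p m) ξ) ^ 2 <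
        -(4 * dm H x p m) * dotE (jacp B x p m ξ) ξ
  /-- normalization (2.4) -/
  Hgrowth : ∀ (x p : Ed d) (m : ℝ), 0 < m →
      C₀⁻¹ * ψ m * ‖p‖ ^ γ - Cb m ≤ H x p m ∧ H x p m ≤ C₀ * ψ m * ‖p‖ ^ γ + Cb m
  /-- normalization (2.5) -/
  Hnorm : ∀ (x : Ed d) (m : ℝ), m ∈ Icc (⨅ y, m₀ y) (⨆ y, m₀ y) → |H x 0 m| ≤ C₀
  Bnorm : ∀ (x : Ed d) (m : ℝ), m ∈ Icc (⨅ y, m₀ y) (⨆ y, m₀ y) → ‖B x 0 m‖ ≤ C₀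

/-- `(u,m)` is a classical solution of the (EMFG) system (regularity stated separately). -/
structure IsSol (S : Setup d) (u m : Ed d → ℝ → ℝ) : Prop where
  u_per : ∀ t : ℝ, XPeriodic (fun x => u x t)
  m_per : ∀ t : ℝ, XPeriodic (fun x => m x t)
  m_pos : ∀ (x : Ed d) (t : ℝ), t ∈ Icc 0 S.T → 0 < m x t
  hjb : ∀ (x : Ed d) (t : ℝ), t ∈ Ioo 0 S.T →
      -(tderiv S.T u x t) + S.H x (sgrad u x t) (m x t) = 0
  kfp : ∀ (x : Ed d) (t : ℝ), t ∈ Ioo 0 S.T →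
      tderiv S.T m x t -
        ∑ i, ((fderiv ℝ (fun x' => S.B x' (sgrad u x' t) (m x' t)) x)
          (EuclideanSpace.single i (1:ℝ))) i = 0
  init : ∀ x : Ed d, m x 0 = S.m₀ x
  term : ∀ x : Ed d, u x S.T = S.g x (m x S.T)

end EMFG

namespace EMFG

/-- The function `h` of (3.3): `h(σ) = sup{m > 0 : sup_{(x,p)}(H(x,p,m) − C₀ψ(m)|p|^γ) ≥ −σ}`. -/
def hFun {d : ℕ} (S : Setup d) (σ : ℝ) : ℝ :=
  sSup {m : ℝ | 0 < m ∧
    -σ ≤ ⨆ z : Ed d × Ed d, (S.H z.1 z.2 m - S.C₀ * S.ψ m * ‖z.2‖ ^ S.γ)}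

/-- `H⁻¹(x,p,·)`: the inverse of `m ↦ H(x,p,m)` on `(0,∞)`. -/
def Hinv {d : ℕ} (S : Setup d) (x p : Ed d) (s : ℝ) : ℝ :=
  Function.invFunOn (fun m => S.H x p m) (Ioi 0) s

/-- `δ_K = inf{H⁻¹(x,p,s) : x ∈ 𝕋^d, p ∈ ℝ^d, s ≤ K}`. -/
def deltaK {d : ℕ} (S : Setup d) (K : ℝ) : ℝ :=
  sInf {r : ℝ | ∃ (x p : Ed d) (s : ℝ), s ≤ K ∧ r = Hinv S x p s}

end EMFG

/-!
Along a solution the Hamilton–Jacobi equation reads `H(x, D_x u, m) = u_t ∈ [-K, K]`. Since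
`H(x, p, ·)` decreases strictly from `+∞` to `-∞`, `H ≤ K` forces `m ≥ H⁻¹(x, D_x u, K) ≥ δ_K`,
and (E1) keeps `δ_K` away from `0`. Then `ψ(m) ≤ sup_{[δ_K,∞)} ψ`, so `H ≥ -K` gives
`H(x, D_x u, m) - C₀ψ(m)|D_x u|^γ ≥ -(K + C₀K^γ sup_{[δ_K,∞)} ψ)`, which is the defining
condition of `h`; (E2) bounds the set whose supremum is `h`. The equation holds only for `0 < t < T`; the bounds
pass to `t ∈ {0, T}` by continuity of `m`.
-/

theorem mapsTo_Icc_of_mapsTo_Ioo {X : Type*} [TopologicalSpace X] {f : ℝ → X} {a b : ℝ}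
    {A : Set X} (hab : a < b) (hf : ContinuousOn f (Icc a b)) (hA : IsClosed A)
    (h : MapsTo f (Ioo a b) A) : MapsTo f (Icc a b) A := fun t ht =>
  hA.closure_subset <| ((hf t ht).mono Ioo_subset_Icc_self).mem_closure
    (by rwa [closure_Ioo hab.ne]) h

namespace EMFG

variable {d : ℕ} (S : Setup d)

namespace Setup

theorem continuousOn_H (x p : Ed d) : ContinuousOn (S.H x p) (Ioi 0) :=
  S.H_smooth.continuousOn.comp (f := fun m => (x, p, m)) (Continuous.continuousOn (by fun_prop))
    fun _ hm => ⟨mem_univ _, mem_univ _, hm⟩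

theorem strictAntiOn_H (x p : Ed d) : StrictAntiOn (S.H x p) (Ioi 0) :=
  strictAntiOn_of_deriv_neg (convex_Ioi 0) (S.continuousOn_H x p) fun m hm =>
    S.Hm_neg x p m (interior_subset hm)

theorem exists_H_eq (x p : Ed d) (s : ℝ) : ∃ m ∈ Ioi (0 : ℝ), S.H x p m = s := by
  obtain ⟨δ, hδ, hsmall⟩ := S.E1 (s + 1)
  obtain ⟨R, hlarge⟩ := S.E2 (S.C₀ * S.ψ 1 * ‖p‖ ^ S.γ - s + 1)
  set b := max R 1
  have hb : 1 ≤ b := le_max_right R 1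
  have hHa : s + 1 ≤ S.H x p (δ / 2) := hsmall x p _ (by positivity) (by linarith)
  have hHb : S.H x p b ≤ s - 1 := by
    have hψ : S.C₀ * S.ψ b * ‖p‖ ^ S.γ ≤ S.C₀ * S.ψ 1 * ‖p‖ ^ S.γ := by
      gcongr
      · exact S.C₀_pos.le
      · exact S.ψ_mono 1 b one_pos hb
    linarith [hlarge x p b (by linarith) (le_max_left R 1)]
  have hsub : uIcc (δ / 2) b ⊆ Ioi 0 := fun m hm =>
    lt_of_lt_of_le (lt_min (by positivity) (by linarith)) hm.1
  obtain ⟨m, hm, rfl⟩ := intermediate_value_uIcc ((S.continuousOn_H x p).mono hsub)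
    (show s ∈ uIcc (S.H x p (δ / 2)) (S.H x p b) from
      ⟨inf_le_right.trans (by linarith), (by linarith : s ≤ S.H x p (δ / 2)).trans le_sup_left⟩)
  exact ⟨m, hsub hm, rfl⟩

theorem ψ_le_sSup_image_Ici {δ m : ℝ} (hδ : 0 < δ) (hm : δ ≤ m) :
    S.ψ m ≤ sSup (S.ψ '' Ici δ) :=
  le_csSup ⟨S.ψ δ, by rintro _ ⟨m', hm', rfl⟩; exact S.ψ_mono δ m' hδ hm'⟩ ⟨m, hm, rfl⟩

end Setup

theorem Hinv_pos (x p : Ed d) (s : ℝ) : 0 < Hinv S x p s :=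
  invFunOn_mem (S.exists_H_eq x p s)

theorem H_Hinv (x p : Ed d) (s : ℝ) : S.H x p (Hinv S x p s) = s :=
  invFunOn_eq (S.exists_H_eq x p s)

theorem Hinv_le_of_H_le {x p : Ed d} {m s : ℝ} (hm : 0 < m) (hH : S.H x p m ≤ s) :
    Hinv S x p s ≤ m :=
  ((S.strictAntiOn_H x p).le_iff_ge hm (Hinv_pos S x p s)).mp (by rwa [H_Hinv])

theorem exists_pos_le_Hinv (K : ℝ) : ∃ δ > 0, ∀ x p s, s ≤ K → δ ≤ Hinv S x p s := by
  obtain ⟨δ, hδ, hsmall⟩ := S.E1 (K + 1)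
  refine ⟨δ, hδ, fun x p s hs => not_lt.mp fun hlt => ?_⟩
  have := hsmall x p _ (Hinv_pos S x p s) hlt
  rw [H_Hinv] at this
  linarith

theorem deltaK_pos (K : ℝ) : 0 < deltaK S K := by
  obtain ⟨δ, hδ, hle⟩ := exists_pos_le_Hinv S K
  refine hδ.trans_le (le_csInf ⟨Hinv S 0 0 K, 0, 0, K, le_rfl, rfl⟩ ?_)
  rintro _ ⟨x, p, s, hs, rfl⟩
  exact hle x p s hs

theorem deltaK_le_of_H_le {K : ℝ} {x p : Ed d} {m : ℝ} (hm : 0 < m) (hH : S.H x p m ≤ K) :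
    deltaK S K ≤ m := by
  obtain ⟨δ, -, hle⟩ := exists_pos_le_Hinv S K
  have hbdd : BddBelow {r : ℝ | ∃ (x p : Ed d) (s : ℝ), s ≤ K ∧ r = Hinv S x p s} := by
    refine ⟨δ, ?_⟩
    rintro _ ⟨x, p, s, hs, rfl⟩
    exact hle x p s hs
  exact (csInf_le hbdd ⟨x, p, K, le_rfl, rfl⟩).trans (Hinv_le_of_H_le S hm hH)

theorem le_hFun {σ : ℝ} {x p : Ed d} {m : ℝ} (hm : 0 < m)
    (hH : -σ ≤ S.H x p m - S.C₀ * S.ψ m * ‖p‖ ^ S.γ) : m ≤ hFun S σ := by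
  obtain ⟨R, hlarge⟩ := S.E2 (σ + 1)
  refine le_csSup ⟨max R 0, ?_⟩ ⟨hm, ?_⟩
  · rintro m' ⟨hm', hsup⟩
    refine not_lt.mp fun hlt => ?_
    have : (⨆ z : Ed d × Ed d, (S.H z.1 z.2 m' - S.C₀ * S.ψ m' * ‖z.2‖ ^ S.γ)) ≤ -(σ + 1) :=
      ciSup_le fun z => hlarge z.1 z.2 m' hm' ((le_max_left R 0).trans hlt.le)
    linarith
  · refine hH.trans (le_ciSup (f := fun z : Ed d × Ed d =>
      S.H z.1 z.2 m - S.C₀ * S.ψ m * ‖z.2‖ ^ S.γ) ⟨S.Cb m, ?_⟩ (x, p))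
    rintro _ ⟨z, rfl⟩
    linarith [(S.Hgrowth z.1 z.2 m hm).2]

theorem le_hFun_of_abs_H_le {K : ℝ} {x p : Ed d} {m : ℝ} (hm : 0 < m) (hp : ‖p‖ ≤ K)
    (hH : |S.H x p m| ≤ K) :
    m ≤ hFun S (K + S.C₀ * K ^ S.γ * sSup (S.ψ '' Ici (deltaK S K))) := by
  have hψ : S.ψ m ≤ sSup (S.ψ '' Ici (deltaK S K)) :=
    S.ψ_le_sSup_image_Ici (deltaK_pos S K) (deltaK_le_of_H_le S hm (le_of_abs_le hH))
  have hpγ : ‖p‖ ^ S.γ ≤ K ^ S.γ := Real.rpow_le_rpow (norm_nonneg p) hp (by linarith [S.hγ])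
  have hcost : S.C₀ * S.ψ m * ‖p‖ ^ S.γ ≤ S.C₀ * K ^ S.γ * sSup (S.ψ '' Ici (deltaK S K)) := by
    calc S.C₀ * S.ψ m * ‖p‖ ^ S.γ ≤ S.C₀ * sSup (S.ψ '' Ici (deltaK S K)) * K ^ S.γ := by
          gcongr
          · exact mul_nonneg S.C₀_pos.le ((S.ψ_pos m hm).le.trans hψ)
          · exact S.C₀_pos.le
      _ = _ := by ring
  exact le_hFun S hm (by linarith [neg_abs_le (S.H x p m)])

theorem IsSol.H_eq_tderiv {S : Setup d} {u m : Ed d → ℝ → ℝ} (hsol : IsSol S u m)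
    {x : Ed d} {t : ℝ} (ht : t ∈ Ioo 0 S.T) : S.H x (sgrad u x t) (m x t) = tderiv S.T u x t := by
  linarith [hsol.hjb x t ht]

theorem RegOn.continuousOn_slice {n : ℕ} {T : ℝ} {m : Ed d → ℝ → ℝ} (hm : RegOn n T m)
    (x : Ed d) : ContinuousOn (m x) (Icc 0 T) :=
  hm.continuousOn.comp (f := fun t => (x, t)) (Continuous.continuousOn (by fun_prop))
    fun _ ht => ⟨mem_univ _, ht⟩

theorem density_global_bounds_general (d : ℕ) (S : Setup d) (u m : Ed d → ℝ → ℝ)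
    (hsol : IsSol S u m) (hm : RegOn 2 S.T m)
    (K : ℝ)
    (hDu : ∀ (x : Ed d) (t : ℝ), t ∈ Icc 0 S.T →
      ‖sgrad u x t‖ ≤ K ∧ |tderiv S.T u x t| ≤ K) :
    0 < deltaK S K ∧
    ∀ (x : Ed d) (t : ℝ), t ∈ Icc 0 S.T →
      deltaK S K ≤ m x t ∧
      m x t ≤ hFun S (K + S.C₀ * K ^ S.γ * sSup (S.ψ '' Ici (deltaK S K))) := by
  refine ⟨deltaK_pos S K, fun x => ?_⟩
  refine mapsTo_Icc_of_mapsTo_Ioo S.T_pos (hm.continuousOn_slice x) isClosed_Icc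
    fun t ht => ?_
  have hmt : 0 < m x t := hsol.m_pos x t (Ioo_subset_Icc_self ht)
  obtain ⟨hp, hut⟩ := hDu x t (Ioo_subset_Icc_self ht)
  have hH : |S.H x (sgrad u x t) (m x t)| ≤ K := hsol.H_eq_tderiv ht ▸ hut
  exact ⟨deltaK_le_of_H_le S hmt (le_of_abs_le hH), le_hFun_of_abs_H_le S hmt hp hH⟩

/-- Corollary 3.4: global positive two-sided bounds for the density.
If `‖Du‖_{C⁰(Q̄_T)} ≤ K` then `δ_K > 0` and
`δ_K ≤ m ≤ h(K + C₀K^γ · sup_{[δ_K,∞)} ψ)` on `Q̄_T`. -/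
theorem density_global_bounds (d : ℕ) (S : Setup d) (u m : Ed d → ℝ → ℝ)
    (hsol : IsSol S u m) (hu : RegOn 3 S.T u) (hm : RegOn 2 S.T m)
    (K : ℝ) (hK : 0 < K)
    (hDu : ∀ (x : Ed d) (t : ℝ), t ∈ Icc 0 S.T →
      ‖sgrad u x t‖ ≤ K ∧ |tderiv S.T u x t| ≤ K) :
    0 < deltaK S K ∧
    ∀ (x : Ed d) (t : ℝ), t ∈ Icc 0 S.T →
      deltaK S K ≤ m x t ∧
      m x t ≤ hFun S (K + S.C₀ * K ^ S.γ * sSup (S.ψ '' Ici (deltaK S K))) :=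
  density_global_bounds_general d S u m hsol hm K hDu

end EMFG
end
end

section
/- Suppose (E3) holds: for all (x,p,m), ξᵀ(−H_m D_pB)ξ ≥ (1 + 1/C₀)·¼((B_m − D_pH)·ξ)² for all ξ ∈ ℝ^d, where all derivatives of H, B are evaluated at (x,p,m). Set Y⁺ = B_m + D_pH, Y⁻ = B_m − D_pH and define A(x,p,m) = (½Y⁺, −1)ᵀ(½Y⁺, −1) − blockdiag( ¼Y⁻(Y⁻)ᵀ + H_m D_pB , 0 ). Then there exists C > 0 depending only on C₀ such that for every (x,p,m) ∈ 𝕋^d × ℝ^d × (0,∞) and every s ∈ ℝ, writing q = (p,s) ∈ ℝ^{d+1}: (i) qᵀA(x,p,m)q ≥ ( −s + ½Y⁺·p )² + (1/C)( ½Y⁻·p )² + (1/C)(−H_m) pᵀD_pB p, and (ii) ( −s + D_pH·p )² ≤ C · qᵀA(x,p,m)q. -/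
open Set Function MeasureTheory Filter
open scoped Topology

noncomputable section

namespace EMFG

/-- For `a ∈ ℝ^d`, the vector `(a, −1) ∈ ℝ^{d+1}` (indexed by `Fin d ⊕ Fin 1`). -/
def extv {d : ℕ} (a : Ed d) : (Fin d ⊕ Fin 1) → ℝ :=
  Sum.elim (fun i => a i) (fun _ => -1)

/-- The `(d+1)×(d+1)` coefficient matrix (Q1) of the quasilinear equation:
`A = (½(B_m+D_pH),−1)ᵀ(½(B_m+D_pH),−1) − blockdiag(¼(B_m−D_pH)(B_m−D_pH)ᵀ + H_m D_pB, 0)`. -/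
def Amat {d : ℕ} (H : Ed d → Ed d → ℝ → ℝ) (B : Ed d → Ed d → ℝ → Ed d)
    (x p : Ed d) (m : ℝ) : Matrix (Fin d ⊕ Fin 1) (Fin d ⊕ Fin 1) ℝ :=
  Matrix.vecMulVec (extv ((1/2 : ℝ) • (vdm B x p m + gradp H x p m)))
      (extv ((1/2 : ℝ) • (vdm B x p m + gradp H x p m))) -
    Matrix.fromBlocks
      ((1/4 : ℝ) • Matrix.vecMulVec (fun i => (vdm B x p m - gradp H x p m) i)
          (fun i => (vdm B x p m - gradp H x p m) i) +
        Matrix.of (fun i j => dm H x p m *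
          (jacp B x p m (EuclideanSpace.single j (1:ℝ))) i))
      0 0 0

/-- The first order coefficient (Q2), at a given density value `m`:
`b = −D_xH·B_m + H_m div_xB`. -/
def bcoef {d : ℕ} (H : Ed d → Ed d → ℝ → ℝ) (B : Ed d → Ed d → ℝ → Ed d)
    (x p : Ed d) (m : ℝ) : ℝ :=
  -(dotE (gradx H x p m) (vdm B x p m)) + dm H x p m * divx B x p m

/-- The full `(d+1)×(d+1)` space-time Hessian `D²u` of `u` at `(x,t)` (time derivatives
taken within `[0,T]`). -/
def fullHess {d : ℕ} (T : ℝ) (u : Ed d → ℝ → ℝ) (x : Ed d) (t : ℝ) :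
    (Fin d ⊕ Fin 1) → (Fin d ⊕ Fin 1) → ℝ := fun i j =>
  match i, j with
  | Sum.inl i, Sum.inl j =>
      ((fderiv ℝ (fun x' => sgrad u x' t) x) (EuclideanSpace.single j (1:ℝ))) i
  | Sum.inl i, Sum.inr _ => derivWithin (fun s => sgrad u x s i) (Icc 0 T) t
  | Sum.inr _, Sum.inl j =>
      (fderiv ℝ (fun x' => tderiv T u x' t) x) (EuclideanSpace.single j (1:ℝ))
  | Sum.inr _, Sum.inr _ => derivWithin (fun s => tderiv T u x s) (Icc 0 T) t

end EMFG

namespace EMFG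

open Matrix

/-- The space-time vector `q = (p,s) ∈ ℝ^{d+1}`. -/
def qvec {d : ℕ} (p : Ed d) (s : ℝ) : (Fin d ⊕ Fin 1) → ℝ :=
  Sum.elim (fun i => p i) (fun _ => s)

/-! With `X = −s + ½Y⁺·p`, `Z = ½Y⁻·p` and `G = −H_m pᵀD_pB p`, the quadratic form is
`qᵀAq = X² − Z² + G`, and (E3) at `ξ = p` reads `(1 + 1/C₀) Z² ≤ G`. Thus `G` absorbs `Z²` with
a margin, which gives (i) with `C = 2(1 + C₀)`; and since `−s + D_pH·p = X − Z`, (ii) follows from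
`(X − Z)² ≤ 2X² + 2Z² ≤ C (X² + Z²/C₀) ≤ C (X² − Z² + G)`. -/

theorem dotProduct_vecMulVec_mulVec {n R : Type*} [Fintype n] [CommSemiring R]
    (q u v w : n → R) : q ⬝ᵥ vecMulVec u v *ᵥ w = (q ⬝ᵥ u) * (v ⬝ᵥ w) := by
  rw [vecMulVec_mulVec, op_smul_eq_smul, dotProduct_smul, smul_eq_mul, mul_comm]

theorem sumElim_dotProduct_fromBlocks_zero_mulVec {m n R : Type*} [Fintype m] [Fintype n]
    [NonUnitalNonAssocSemiring R] (M : Matrix m m R) (p : m → R) (s : n → R) :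
    Sum.elim p s ⬝ᵥ fromBlocks M 0 0 (0 : Matrix n n R) *ᵥ Sum.elim p s = p ⬝ᵥ M *ᵥ p := by
  simp [fromBlocks_mulVec, sumElim_dotProduct_sumElim]

theorem of_single_mulVec {𝕜 m n : Type*} [RCLike 𝕜] [Fintype m] [Fintype n] [DecidableEq n]
    (J : EuclideanSpace 𝕜 n →ₗ[𝕜] EuclideanSpace 𝕜 m) (p : EuclideanSpace 𝕜 n) :
    (of fun i j => J (EuclideanSpace.single j (1 : 𝕜)) i) *ᵥ (fun i => p i) =
      fun i => J p i := by
  have hJ : (of fun i j => J (EuclideanSpace.single j (1 : 𝕜)) i) =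
      LinearMap.toMatrix (EuclideanSpace.basisFun n 𝕜).toBasis
        (EuclideanSpace.basisFun m 𝕜).toBasis J := by
    ext i j
    simp [LinearMap.toMatrix_apply]
  rw [hJ]
  exact LinearMap.toMatrix_mulVec_repr _ _ J p

theorem dotE_eq_dotProduct {d : ℕ} (u v : Ed d) :
    dotE u v = (fun i => u i) ⬝ᵥ (fun i => v i) := by
  rw [dotE, EuclideanSpace.inner_eq_star_dotProduct, dotProduct_comm]
  rfl

theorem extv_dotProduct_qvec {d : ℕ} (a p : Ed d) (s : ℝ) :
    extv a ⬝ᵥ qvec p s = dotE a p - s := by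
  simp [extv, qvec, dotE_eq_dotProduct, dotProduct, sub_eq_add_neg]

theorem qvec_dotProduct_Amat_mulVec {d : ℕ} (H : Ed d → Ed d → ℝ → ℝ)
    (B : Ed d → Ed d → ℝ → Ed d) (x p : Ed d) (m s : ℝ) :
    qvec p s ⬝ᵥ (Amat H B x p m) *ᵥ qvec p s =
      (-s + dotE ((1/2 : ℝ) • (vdm B x p m + gradp H x p m)) p) ^ 2 -
        (dotE ((1/2 : ℝ) • (vdm B x p m - gradp H x p m)) p) ^ 2 +
        -(dm H x p m) * dotE (jacp B x p m p) p := by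
  set J : Ed d →ₗ[ℝ] Ed d := (jacp B x p m : Ed d →ₗ[ℝ] Ed d)
  have hJ : (of fun i j => dm H x p m * jacp B x p m (EuclideanSpace.single j (1 : ℝ)) i) =
      dm H x p m • of fun i j => J (EuclideanSpace.single j (1 : ℝ)) i := by
    ext i j; simp [J]
  rw [Amat, sub_mulVec, dotProduct_sub, dotProduct_vecMulVec_mulVec, dotProduct_comm (qvec p s),
    extv_dotProduct_qvec, qvec, sumElim_dotProduct_fromBlocks_zero_mulVec, add_mulVec,
    dotProduct_add, smul_mulVec, dotProduct_smul, dotProduct_vecMulVec_mulVec, hJ, smul_mulVec,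
    dotProduct_smul, of_single_mulVec, ← dotE_eq_dotProduct, ← dotE_eq_dotProduct,
    ← dotE_eq_dotProduct]
  simp only [J, smul_eq_mul, ContinuousLinearMap.coe_coe, dotE, real_inner_smul_right,
    real_inner_comm p]
  ring

theorem sq_add_inv_mul_le_sq_sub_sq_add {c x z g : ℝ} (hc : 0 < c)
    (h : (1 + c⁻¹) * z ^ 2 ≤ g) :
    x ^ 2 + (2 * (1 + c))⁻¹ * z ^ 2 + (2 * (1 + c))⁻¹ * g ≤ x ^ 2 - z ^ 2 + g := by
  have hz : (1 + c) * z ^ 2 ≤ c * g := by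
    calc (1 + c) * z ^ 2 = c * ((1 + c⁻¹) * z ^ 2) := by field_simp; ring
      _ ≤ c * g := by gcongr
  have hg : 0 ≤ g := le_trans (by positivity) h
  have hdiff : x ^ 2 - z ^ 2 + g - (x ^ 2 + (2 * (1 + c))⁻¹ * z ^ 2 + (2 * (1 + c))⁻¹ * g) =
      ((2 * c + 1) * g - (2 * c + 3) * z ^ 2) / (2 * (1 + c)) := by
    field_simp
    ring
  rw [← sub_nonneg, hdiff]
  apply div_nonneg _ (by positivity)
  nlinarith

theorem sq_sub_le_mul_sq_sub_sq_add {c x z g : ℝ} (hc : 0 < c)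
    (h : (1 + c⁻¹) * z ^ 2 ≤ g) :
    (x - z) ^ 2 ≤ 2 * (1 + c) * (x ^ 2 - z ^ 2 + g) := by
  calc (x - z) ^ 2 ≤ 2 * (x ^ 2 + z ^ 2) := by nlinarith [sq_nonneg (x + z)]
    _ ≤ 2 * (1 + c) * (x ^ 2 + c⁻¹ * z ^ 2) := by
      have : 0 ≤ c * x ^ 2 + c⁻¹ * z ^ 2 := by positivity
      have hcc : c * c⁻¹ = 1 := mul_inv_cancel₀ hc.ne'
      linear_combination 2 * this - 2 * z ^ 2 * hcc
    _ ≤ 2 * (1 + c) * (x ^ 2 - z ^ 2 + g) := by gcongr 2 * (1 + c) * ?_; linarith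

/-- estimates (3.13) and (3.15): under the strict ellipticity
condition (E3) there is `C = C(C₀)` such that the quadratic form of `A` controls,
and is controlled by, the dominant signed quantities. -/
theorem quadratic_form_lower_bounds (C₀ : ℝ) (hC₀ : 0 < C₀) :
    ∃ C : ℝ, 0 < C ∧
    ∀ (d : ℕ) (H : Ed d → Ed d → ℝ → ℝ) (B : Ed d → Ed d → ℝ → Ed d),
      ContDiffOn ℝ 1 (fun z : Ed d × Ed d × ℝ => H z.1 z.2.1 z.2.2)
        (univ ×ˢ univ ×ˢ Ioi 0) →
      ContDiffOn ℝ 1 (fun z : Ed d × Ed d × ℝ => B z.1 z.2.1 z.2.2)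
        (univ ×ˢ univ ×ˢ Ioi 0) →
      (∀ (x p : Ed d) (m : ℝ), 0 < m → dm H x p m < 0) →
      (∀ (x p : Ed d) (m : ℝ), 0 < m → ∀ ξ : Ed d,
        (1 + C₀⁻¹) * ((1/4 : ℝ) * (dotE (vdm B x p m - gradp H x p m) ξ) ^ 2) ≤
          -(dm H x p m) * dotE (jacp B x p m ξ) ξ) →
      ∀ (x p : Ed d) (m : ℝ), 0 < m → ∀ s : ℝ,
        ((-s + dotE ((1/2 : ℝ) • (vdm B x p m + gradp H x p m)) p) ^ 2 +
          C⁻¹ * (dotE ((1/2 : ℝ) • (vdm B x p m - gradp H x p m)) p) ^ 2 +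
          C⁻¹ * (-(dm H x p m)) * dotE (jacp B x p m p) p ≤
            qvec p s ⬝ᵥ (Amat H B x p m).mulVec (qvec p s)) ∧
        ((-s + dotE (gradp H x p m) p) ^ 2 ≤
          C * (qvec p s ⬝ᵥ (Amat H B x p m).mulVec (qvec p s))) := by
  refine ⟨2 * (1 + C₀), by positivity, fun d H B _ _ _ hE3 x p m hm s => ?_⟩
  have hE3p : (1 + C₀⁻¹) * dotE ((1/2 : ℝ) • (vdm B x p m - gradp H x p m)) p ^ 2 ≤
      -(dm H x p m) * dotE (jacp B x p m p) p :=
    calc _ = (1 + C₀⁻¹) * ((1/4 : ℝ) * dotE (vdm B x p m - gradp H x p m) p ^ 2) := by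
          rw [dotE, dotE, real_inner_smul_left]; ring
      _ ≤ _ := hE3 x p m hm p
  have hDpH : -s + dotE (gradp H x p m) p =
      (-s + dotE ((1/2 : ℝ) • (vdm B x p m + gradp H x p m)) p) -
        dotE ((1/2 : ℝ) • (vdm B x p m - gradp H x p m)) p := by
    simp only [dotE, real_inner_smul_left, inner_add_left, inner_sub_left]
    ring
  rw [qvec_dotProduct_Amat_mulVec, hDpH, mul_assoc _ (-(dm H x p m))]
  exact ⟨sq_add_inv_mul_le_sq_sub_sq_add hC₀ hE3p, sq_sub_le_mul_sq_sub_sq_add hC₀ hE3p⟩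

end EMFG
end
end

section
/- Suppose H : 𝕋^d × ℝ^d × (0,∞) → ℝ and B : 𝕋^d × ℝ^d × (0,∞) → ℝ^d are C² with H_m < 0, and for each (x,p) the map m ↦ H(x,p,m) is a bijection of (0,∞) onto ℝ with inverse H⁻¹(x,p,·). Define b(x,p,s) = −D_xH·B_m + H_m div_xB, where all derivatives of H and B are evaluated at (x,p,H⁻¹(x,p,s)), and set ζ(p,s) = −s + D_pH(x,p,H⁻¹(x,p,s))·p. Then for every (x,p,s), writing m = H⁻¹(x,p,s) and q = (p,s), the directional derivative of b in the gradient variables satisfies: D_q b(x,p,s)·q = −B_m·( D²_{px}H pᵀ − (D_xH_m)ᵀ H_m⁻¹ ζ ) − D_xH·( D_pB_m pᵀ − (B_{mm})ᵀ H_m⁻¹ ζ ) + H_m( D_p(div_xB)·p − div_xB_m · H_m⁻¹ ζ ) + div_xB ( D_pH_m·p − H_{mm} H_m⁻¹ ζ ), with all derivatives of H and B on the right-hand side evaluated at (x,p,m). -/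
/-!
Write `b(x,p,s) = β(x,p,H⁻¹(x,p,s))` with `β(x,p,m) = −D_xH·B_m + H_m div_xB`. Applying the inverse
function theorem to `(p,m) ↦ (p,H(x,p,m))` differentiates `m = H⁻¹(x,p,s)`:
`D_q H⁻¹ · (p,s) = (s − D_pH·p)/H_m = −H_m⁻¹ζ`, hence `D_q b·q = D_pβ·p − β_m H_m⁻¹ζ`, and the
product rule expands `D_pβ·p` and `β_m` into the four terms. The one step that is not formal is
`∂_m D_xH = D_xH_m` and `∂_m div_xB = div_xB_m`: the symmetry of the second derivative of the
`C²` maps `H` and `B`.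
-/
open Set Function MeasureTheory Filter
open scoped Topology

noncomputable section

namespace EMFG

/-- `D²_{px}H`: the derivative in `p` of `D_xH`. -/
def hesspx {d : ℕ} (H : Ed d → Ed d → ℝ → ℝ) (x p : Ed d) (m : ℝ) : Ed d →L[ℝ] Ed d :=
  fderiv ℝ (fun p' => gradx H x p' m) p

/-- `div_x B_m`. -/
def divxdm {d : ℕ} (B : Ed d → Ed d → ℝ → Ed d) (x p : Ed d) (m : ℝ) : ℝ :=
  ∑ i, (jacxdm B x p m (EuclideanSpace.single i (1:ℝ))) i

/-- The first order coefficient `b(x,p,s) = −D_xH·B_m + H_m div_xB`, all derivatives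
evaluated at `(x,p,H⁻¹(x,p,s))`. -/
def bQ {d : ℕ} (H : Ed d → Ed d → ℝ → ℝ) (B : Ed d → Ed d → ℝ → Ed d)
    (Hinv : Ed d → Ed d → ℝ → ℝ) (x p : Ed d) (s : ℝ) : ℝ :=
  -(dotE (gradx H x p (Hinv x p s)) (vdm B x p (Hinv x p s))) +
    dm H x p (Hinv x p s) * divx B x p (Hinv x p s)

end EMFG

section PartialDerivatives

variable {E F G : Type*} [NormedAddCommGroup E] [NormedSpace ℝ E]
  [NormedAddCommGroup F] [NormedSpace ℝ F] [NormedAddCommGroup G] [NormedSpace ℝ G]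

theorem ContDiffAt.differentiableAt_fderiv {φ : E → G} {z : E} (hφ : ContDiffAt ℝ 2 φ z) :
    DifferentiableAt ℝ (fderiv ℝ φ) z :=
  (hφ.fderiv_right (m := 1) (by norm_num)).differentiableAt one_ne_zero

theorem ContDiffAt.eventually_differentiableAt {φ : E → G} {z : E} (hφ : ContDiffAt ℝ 2 φ z) :
    ∀ᶠ z' in 𝓝 z, DifferentiableAt ℝ φ z' :=
  (hφ.eventually (by simp)).mono fun _ h => h.differentiableAt (by norm_num)

theorem fderiv_prod_apply_eq_partials {Φ : E × ℝ → G} {p : E} {m : ℝ}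
    (hΦ : DifferentiableAt ℝ Φ (p, m)) (v : E) (t : ℝ) :
    fderiv ℝ Φ (p, m) (v, t) =
      fderiv ℝ (fun p' => Φ (p', m)) p v + t • deriv (fun m' => Φ (p, m')) m := by
  have hp := (hΦ.hasFDerivAt.comp p (hasFDerivAt_prodMk_left (𝕜 := ℝ) p m)).fderiv
  have hm := (hΦ.hasFDerivAt.comp m (hasFDerivAt_prodMk_right (𝕜 := ℝ) p m)).fderiv
  have hvt : ((v, t) : E × ℝ) = (v, 0) + t • (0, 1) := by simp
  simp only [Function.comp_def] at hp hm
  rw [deriv, hp, hm, hvt, map_add, map_smul]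
  rfl

theorem fderiv_slice_fst_eventuallyEq {φ : E × F → G} {z : E × F}
    (hφ : ∀ᶠ z' in 𝓝 z, DifferentiableAt ℝ φ z') :
    (fun z' : E × F => fderiv ℝ (fun a => φ (a, z'.2)) z'.1) =ᶠ[𝓝 z]
      fun z' => (fderiv ℝ φ z').comp (ContinuousLinearMap.inl ℝ E F) :=
  hφ.mono fun z' h => (h.hasFDerivAt.comp z'.1 (hasFDerivAt_prodMk_left (𝕜 := ℝ) z'.1 z'.2)).fderiv

theorem fderiv_slice_snd_eventuallyEq {φ : E × F → G} {z : E × F}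
    (hφ : ∀ᶠ z' in 𝓝 z, DifferentiableAt ℝ φ z') :
    (fun z' : E × F => fderiv ℝ (fun b => φ (z'.1, b)) z'.2) =ᶠ[𝓝 z]
      fun z' => (fderiv ℝ φ z').comp (ContinuousLinearMap.inr ℝ E F) :=
  hφ.mono fun z' h =>
    (h.hasFDerivAt.comp z'.2 (hasFDerivAt_prodMk_right (𝕜 := ℝ) z'.1 z'.2)).fderiv

theorem ContDiffAt.differentiableAt_fderiv_slice_fst {φ : E × F → G} {z : E × F}
    (hφ : ContDiffAt ℝ 2 φ z) :
    DifferentiableAt ℝ (fun z' : E × F => fderiv ℝ (fun a => φ (a, z'.2)) z'.1) z :=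
  (hφ.differentiableAt_fderiv.clm_comp (differentiableAt_const _)).congr_of_eventuallyEq
    (fderiv_slice_fst_eventuallyEq hφ.eventually_differentiableAt)

theorem ContDiffAt.differentiableAt_fderiv_slice_snd {φ : E × F → G} {z : E × F}
    (hφ : ContDiffAt ℝ 2 φ z) :
    DifferentiableAt ℝ (fun z' : E × F => fderiv ℝ (fun b => φ (z'.1, b)) z'.2) z :=
  (hφ.differentiableAt_fderiv.clm_comp (differentiableAt_const _)).congr_of_eventuallyEq
    (fderiv_slice_snd_eventuallyEq hφ.eventually_differentiableAt)

theorem fderiv_fderiv_apply_comp {X : Type*} [NormedAddCommGroup X] [NormedSpace ℝ X]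
    {φ : E → G} {ι : X → E} {T : X →L[ℝ] E} {x : X}
    (hD : DifferentiableAt ℝ (fderiv ℝ φ) (ι x)) (hι : HasFDerivAt ι T x) (y : E) (v : X) :
    fderiv ℝ (fun x' => fderiv ℝ φ (ι x') y) x v = fderiv ℝ (fderiv ℝ φ) (ι x) (T v) y := by
  have h : HasFDerivAt (fun x' => fderiv ℝ φ (ι x') y) _ x :=
    (hD.hasFDerivAt.clm_apply (hasFDerivAt_const y (ι x))).comp x hι
  rw [h.fderiv]
  simp

theorem ContDiffAt.fderiv_fderiv_slice_comm {φ : E × F → G} {a : E} {b : F}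
    (hφ : ContDiffAt ℝ 2 φ (a, b)) (u : E) (w : F) :
    fderiv ℝ (fun a' => fderiv ℝ (fun b' => φ (a', b')) b w) a u =
      fderiv ℝ (fun b' => fderiv ℝ (fun a' => φ (a', b')) a u) b w := by
  have hD := hφ.differentiableAt_fderiv
  have hev := hφ.eventually_differentiableAt
  have hfst : (fun a' => fderiv ℝ (fun b' => φ (a', b')) b w) =ᶠ[𝓝 a]
      fun a' => fderiv ℝ φ (a', b) (0, w) :=
    ((continuous_id.prodMk continuous_const).tendsto' a (a, b) rfl).eventually
      (fderiv_slice_snd_eventuallyEq hev) |>.mono fun a' h => by simp only [id] at h; simp [h]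
  have hsnd : (fun b' => fderiv ℝ (fun a' => φ (a', b')) a u) =ᶠ[𝓝 b]
      fun b' => fderiv ℝ φ (a, b') (u, 0) :=
    ((continuous_const.prodMk continuous_id).tendsto' b (a, b) rfl).eventually
      (fderiv_slice_fst_eventuallyEq hev) |>.mono fun b' h => by simp only [id] at h; simp [h]
  rw [hfst.fderiv_eq, hsnd.fderiv_eq,
    fderiv_fderiv_apply_comp (ι := fun a' => (a', b)) hD (hasFDerivAt_prodMk_left a b),
    fderiv_fderiv_apply_comp (ι := fun b' => (a, b')) hD (hasFDerivAt_prodMk_right a b)]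
  exact hφ.isSymmSndFDerivAt (by simp) _ _

theorem fderiv_comp_partialInverse_apply [CompleteSpace E] {Φ : E × ℝ → G} {h g : E × ℝ → ℝ}
    {L : E × ℝ →L[ℝ] ℝ} {a : E × ℝ} (hΦ : DifferentiableAt ℝ Φ a)
    (hh : HasStrictFDerivAt h L a) (hL : L (0, 1) ≠ 0) (hg : ∀ᶠ q in 𝓝 a, g (q.1, h q) = q.2)
    (v : E) (t : ℝ) :
    fderiv ℝ (fun q => Φ (q.1, g q)) (a.1, h a) (v, t) =
      fderiv ℝ Φ a (v, (L (0, 1))⁻¹ * (t - L (v, 0))) := by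
  -- `S (v, t) = (v, L (v, t))`, written as a `skewProd` so that its inverse is explicit.
  set S : (E × ℝ) ≃L[ℝ] (E × ℝ) := (ContinuousLinearEquiv.refl ℝ E).skewProd
    (ContinuousLinearEquiv.unitsEquivAut ℝ (Units.mk0 _ hL)) (L.comp (.inl ℝ E ℝ))
  have hS : HasStrictFDerivAt (fun q => (q.1, h q)) (S : E × ℝ →L[ℝ] E × ℝ) a := by
    have hSL : (S : E × ℝ →L[ℝ] E × ℝ) = (ContinuousLinearMap.fst ℝ E ℝ).prod L := by
      refine ContinuousLinearMap.ext fun ⟨v, t⟩ => Prod.ext rfl ?_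
      have hvt : ((v, t) : E × ℝ) = (v, 0) + t • (0, 1) := by simp
      simp only [S, ContinuousLinearEquiv.coe_coe, ContinuousLinearEquiv.skewProd_apply,
        ContinuousLinearEquiv.unitsEquivAut_apply, ContinuousLinearMap.prod_apply,
        ContinuousLinearMap.comp_apply, ContinuousLinearMap.inl_apply, Units.val_mk0]
      rw [hvt, map_add, map_smul, smul_eq_mul]
      ring
    exact hSL ▸ hasStrictFDerivAt_fst.prodMk hh
  have hinv := hS.to_local_left_inverse (g := fun q => (q.1, g q))
    (hg.mono fun q hq => Prod.ext rfl hq)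
  have ha : (a.1, g (a.1, h a)) = a := Prod.ext rfl hg.self_of_nhds
  rw [← ha] at hΦ
  have hcomp : HasFDerivAt (fun q => Φ (q.1, g q)) _ (a.1, h a) :=
    hΦ.hasFDerivAt.comp (f := fun q : E × ℝ => (q.1, g q)) (a.1, h a) hinv.hasFDerivAt
  rw [hcomp.fderiv, ha]
  simp [S, mul_comm]

end PartialDerivatives

theorem EuclideanSpace.gradient_apply {ι : Type*} [Fintype ι] [DecidableEq ι]
    (φ : EuclideanSpace ℝ ι → ℝ) (y : EuclideanSpace ℝ ι) (i : ι) :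
    gradient φ y i = fderiv ℝ φ y (EuclideanSpace.single i 1) := by
  rw [gradient, ← InnerProductSpace.toDual_symm_apply, EuclideanSpace.inner_single_right]
  simp

namespace EMFG

section

variable {d : ℕ} {H : Ed d → Ed d → ℝ → ℝ} {B : Ed d → Ed d → ℝ → Ed d} {x p : Ed d} {m : ℝ}

theorem dotE_gradient (φ : Ed d → ℝ) (y v : Ed d) : dotE (gradient φ y) v = fderiv ℝ φ y v :=
  InnerProductSpace.toDual_symm_apply

theorem differentiableAt_gradx
    (hH : ContDiffAt ℝ 2 (fun z : Ed d × Ed d × ℝ => H z.1 z.2.1 z.2.2) (x, p, m)) :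
    DifferentiableAt ℝ (fun q : Ed d × ℝ => gradx H x q.1 q.2) (p, m) := by
  refine differentiableAt_euclidean.mpr fun i => ?_
  simp only [gradx, EuclideanSpace.gradient_apply]
  exact ((hH.differentiableAt_fderiv_slice_fst).comp (p, m)
    ((differentiableAt_const x).prodMk differentiableAt_id)).clm_apply (differentiableAt_const _)

theorem differentiableAt_dm
    (hH : ContDiffAt ℝ 2 (fun z : Ed d × Ed d × ℝ => H z.1 z.2.1 z.2.2) (x, p, m)) :
    DifferentiableAt ℝ (fun q : Ed d × ℝ => dm H x q.1 q.2) (p, m) :=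
  ((hH.comp (p, m) (contDiffAt_const.prodMk contDiffAt_id)).differentiableAt_fderiv_slice_snd
    ).clm_apply (differentiableAt_const 1)

theorem differentiableAt_vdm
    (hB : ContDiffAt ℝ 2 (fun z : Ed d × Ed d × ℝ => B z.1 z.2.1 z.2.2) (x, p, m)) :
    DifferentiableAt ℝ (fun q : Ed d × ℝ => vdm B x q.1 q.2) (p, m) :=
  ((hB.comp (p, m) (contDiffAt_const.prodMk contDiffAt_id)).differentiableAt_fderiv_slice_snd
    ).clm_apply (differentiableAt_const 1)

theorem differentiableAt_divx
    (hB : ContDiffAt ℝ 2 (fun z : Ed d × Ed d × ℝ => B z.1 z.2.1 z.2.2) (x, p, m)) :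
    DifferentiableAt ℝ (fun q : Ed d × ℝ => divx B x q.1 q.2) (p, m) := by
  have hJ : DifferentiableAt ℝ (fun q : Ed d × ℝ => jacx B x q.1 q.2) (p, m) :=
    (hB.differentiableAt_fderiv_slice_fst).comp (p, m)
      ((differentiableAt_const x).prodMk differentiableAt_id)
  exact DifferentiableAt.fun_sum fun i _ =>
    differentiableAt_euclidean.mp (hJ.clm_apply (differentiableAt_const _)) i

theorem deriv_gradx
    (hH : ContDiffAt ℝ 2 (fun z : Ed d × Ed d × ℝ => H z.1 z.2.1 z.2.2) (x, p, m)) :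
    deriv (fun m' => gradx H x p m') m = gradxdm H x p m := by
  have hA : DifferentiableAt ℝ (fun m' => gradx H x p m') m :=
    (differentiableAt_gradx hH).comp m ((differentiableAt_const p).prodMk differentiableAt_id)
  refine ext_inner_right ℝ fun v => ?_
  have hφ : ContDiffAt ℝ 2 (fun q : Ed d × ℝ => H q.1 p q.2) (x, m) :=
    hH.comp (x, m) (contDiffAt_fst.prodMk (contDiffAt_const.prodMk contDiffAt_snd))
  have hclairaut := hφ.fderiv_fderiv_slice_comm v 1
  have hinner := (hA.hasDerivAt.inner ℝ (hasDerivAt_const m v)).deriv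
  simp only [inner_zero_right, zero_add] at hinner
  rw [← hinner]
  calc deriv (fun t => inner ℝ (gradx H x p t) v) m
      = fderiv ℝ (fun t => fderiv ℝ (fun x' => H x' p t) x v) m 1 :=
        congrArg (deriv · m) (funext fun t => dotE_gradient _ _ _)
    _ = dotE (gradxdm H x p m) v := hclairaut.symm.trans (dotE_gradient _ _ _).symm

theorem deriv_divx
    (hB : ContDiffAt ℝ 2 (fun z : Ed d × Ed d × ℝ => B z.1 z.2.1 z.2.2) (x, p, m)) :
    deriv (fun m' => divx B x p m') m = divxdm B x p m := by
  have hφ : ContDiffAt ℝ 2 (fun q : Ed d × ℝ => B q.1 p q.2) (x, m) :=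
    hB.comp (x, m) (contDiffAt_fst.prodMk (contDiffAt_const.prodMk contDiffAt_snd))
  have hJ : DifferentiableAt ℝ (fun m' => jacx B x p m') m :=
    hB.differentiableAt_fderiv_slice_fst.comp (f := fun m' : ℝ => ((x, p, m') : Ed d × Ed d × ℝ))
      m       ((differentiableAt_const x).prodMk ((differentiableAt_const p).prodMk differentiableAt_id))
  have hcoord : ∀ i, HasDerivAt (fun m' => jacx B x p m' (EuclideanSpace.single i 1) i)
      (jacxdm B x p m (EuclideanSpace.single i 1) i) m := fun i => by
    have hd : DifferentiableAt ℝ (fun m' => jacx B x p m' (EuclideanSpace.single i 1)) m :=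
      hJ.clm_apply (differentiableAt_const _)
    have hval : deriv (fun m' => jacx B x p m' (EuclideanSpace.single i 1)) m =
        jacxdm B x p m (EuclideanSpace.single i 1) :=
      (hφ.fderiv_fderiv_slice_comm (EuclideanSpace.single i 1) 1).symm
    have h := (EuclideanSpace.proj i).hasFDerivAt.comp_hasDerivAt m hd.hasDerivAt
    rw [hval] at h
    exact h
  exact (HasDerivAt.fun_sum fun i _ => hcoord i).deriv
theorem fderiv_pm_apply
    (hH : DifferentiableAt ℝ (fun q : Ed d × ℝ => H x q.1 q.2) (p, m)) (v : Ed d) (t : ℝ) :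
    fderiv ℝ (fun q : Ed d × ℝ => H x q.1 q.2) (p, m) (v, t) =
      dotE (gradp H x p m) v + t * dm H x p m := by
  rw [fderiv_prod_apply_eq_partials hH, gradp, dotE_gradient, smul_eq_mul]
  rfl

/-- `b` with the density as an independent variable:
`bQ H B Hinv x p s = bCoeff H B x (p, Hinv x p s)`. -/
def bCoeff (H : Ed d → Ed d → ℝ → ℝ) (B : Ed d → Ed d → ℝ → Ed d) (x : Ed d) (q : Ed d × ℝ) : ℝ :=
  -(dotE (gradx H x q.1 q.2) (vdm B x q.1 q.2)) + dm H x q.1 q.2 * divx B x q.1 q.2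

theorem differentiableAt_bCoeff
    (hH : ContDiffAt ℝ 2 (fun z : Ed d × Ed d × ℝ => H z.1 z.2.1 z.2.2) (x, p, m))
    (hB : ContDiffAt ℝ 2 (fun z : Ed d × Ed d × ℝ => B z.1 z.2.1 z.2.2) (x, p, m)) :
    DifferentiableAt ℝ (bCoeff H B x) (p, m) :=
  ((differentiableAt_gradx hH).inner ℝ (differentiableAt_vdm hB)).neg.add
    ((differentiableAt_dm hH).mul (differentiableAt_divx hB))

theorem fderiv_bCoeff_apply
    (hH : ContDiffAt ℝ 2 (fun z : Ed d × Ed d × ℝ => H z.1 z.2.1 z.2.2) (x, p, m))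
    (hB : ContDiffAt ℝ 2 (fun z : Ed d × Ed d × ℝ => B z.1 z.2.1 z.2.2) (x, p, m))
    (v : Ed d) (t : ℝ) :
    fderiv ℝ (bCoeff H B x) (p, m) (v, t) =
      -(dotE (gradx H x p m) (jacpdm B x p m v + t • vdmm B x p m) +
          dotE (hesspx H x p m v + t • gradxdm H x p m) (vdm B x p m)) +
        (dm H x p m * (dotE (gradient (fun p' => divx B x p' m) p) v + t * divxdm B x p m) +
          divx B x p m * (dotE (gradpdm H x p m) v + t * dmm H x p m)) := by
  have h : HasFDerivAt (bCoeff H B x) _ (p, m) := ((differentiableAt_gradx hH).hasFDerivAt.inner ℝ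
    (differentiableAt_vdm hB).hasFDerivAt).neg.add
      ((differentiableAt_dm hH).hasFDerivAt.mul (differentiableAt_divx hB).hasFDerivAt)
  rw [h.fderiv]
  simp only [add_apply, neg_apply, smul_apply, ContinuousLinearMap.comp_apply,
    ContinuousLinearMap.prod_apply, fderivInnerCLM_apply, smul_eq_mul]
  rw [fderiv_prod_apply_eq_partials (differentiableAt_gradx hH),
    fderiv_prod_apply_eq_partials (differentiableAt_vdm hB),
    fderiv_prod_apply_eq_partials (differentiableAt_dm hH),
    fderiv_prod_apply_eq_partials (differentiableAt_divx hB),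
    deriv_gradx hH, deriv_divx hB, gradpdm, dotE_gradient, dotE_gradient]
  rfl

end

/-- identity (3.4) of Lemma 3.2: the radial derivative of the first
order coefficient `b` in the gradient variables `q = (p,s)`. -/
theorem bcoef_radial_derivative (d : ℕ)
    (H : Ed d → Ed d → ℝ → ℝ) (B : Ed d → Ed d → ℝ → Ed d)
    (HC2 : ContDiffOn ℝ 2 (fun z : Ed d × Ed d × ℝ => H z.1 z.2.1 z.2.2)
      (univ ×ˢ univ ×ˢ Ioi 0))
    (BC2 : ContDiffOn ℝ 2 (fun z : Ed d × Ed d × ℝ => B z.1 z.2.1 z.2.2)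
      (univ ×ˢ univ ×ˢ Ioi 0))
    (Hm_neg : ∀ (x p : Ed d) (m : ℝ), 0 < m → dm H x p m < 0)
    (Hinv : Ed d → Ed d → ℝ → ℝ)
    (hInv₁ : ∀ (x p : Ed d) (m : ℝ), 0 < m → Hinv x p (H x p m) = m)
    (hInv₂ : ∀ (x p : Ed d) (s : ℝ), 0 < Hinv x p s ∧ H x p (Hinv x p s) = s) :
    ∀ (x p : Ed d) (s : ℝ) (m ζ : ℝ), m = Hinv x p s →
      ζ = -s + dotE (gradp H x p m) p →
      (fderiv ℝ (fun q : Ed d × ℝ => bQ H B Hinv x q.1 q.2) (p, s)) (p, s) =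
        (-(dotE (vdm B x p m)
            (hesspx H x p m p - ((dm H x p m)⁻¹ * ζ) • gradxdm H x p m)) -
          dotE (gradx H x p m)
            (jacpdm B x p m p - ((dm H x p m)⁻¹ * ζ) • vdmm B x p m) +
          dm H x p m * (dotE (gradient (fun p' => divx B x p' m) p) p -
            divxdm B x p m * ((dm H x p m)⁻¹ * ζ)) +
          divx B x p m * (dotE (gradpdm H x p m) p -
            dmm H x p m * ((dm H x p m)⁻¹ * ζ))) := by
  rintro x p s _ _ rfl rfl
  obtain ⟨hm, hHs⟩ := hInv₂ x p s
  set m := Hinv x p s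
  have hU : univ ×ˢ univ ×ˢ Ioi 0 ∈ 𝓝 ((x, p, m) : Ed d × Ed d × ℝ) :=
    prod_mem_nhds univ_mem (prod_mem_nhds univ_mem (Ioi_mem_nhds hm))
  have hH := HC2.contDiffAt hU
  have hB := BC2.contDiffAt hU
  have hHpm : ContDiffAt ℝ 2 (fun q : Ed d × ℝ => H x q.1 q.2) (p, m) :=
    hH.comp (p, m) (contDiffAt_const.prodMk contDiffAt_id)
  have hDH := fderiv_pm_apply (hHpm.differentiableAt (by norm_num))
  have hHm : fderiv ℝ (fun q : Ed d × ℝ => H x q.1 q.2) (p, m) (0, 1) ≠ 0 := by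
    simpa [hDH, dotE] using (Hm_neg x p m hm).ne
  have hleft : ∀ᶠ q in 𝓝 (p, m), Hinv x q.1 (H x q.1 q.2) = q.2 :=
    (continuous_snd.tendsto (p, m)).eventually (lt_mem_nhds hm) |>.mono
      fun q hq => hInv₁ x q.1 q.2 hq
  have hcomp := fderiv_comp_partialInverse_apply (g := fun q => Hinv x q.1 q.2)
    (differentiableAt_bCoeff hH hB) (hHpm.hasStrictFDerivAt (by norm_num)) hHm hleft p s
  rw [hHs] at hcomp
  change fderiv ℝ (fun q => bCoeff H B x (q.1, Hinv x q.1 q.2)) (p, s) (p, s) = _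
  rw [hcomp, fderiv_bCoeff_apply hH hB, hDH, hDH]
  simp only [dotE, inner_add_left, inner_add_right, inner_sub_right, inner_zero_right,
    real_inner_smul_right, real_inner_comm, zero_add]
  ring

end EMFG
end
end

section
/- Let C₀ > 0 and let φ : (0,∞) → ℝ be C² with φ′(m) < 0 and |m φ″(m)| ≤ −C₀ φ′(m) for all m > 0. Then for all m₁, m₂ ∈ (0,∞): |m₁φ′(m₁) − m₂φ′(m₂)| ≤ (1 + C₀)|φ(m₁) − φ(m₂)|. Equivalently, the map w ↦ φ⁻¹(w)·φ′(φ⁻¹(w)), defined on the range of φ, is Lipschitz continuous with Lipschitz constant 1 + C₀. -/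
open Set Function

/-- Both `g - f` and `g + f` are monotone, which squeezes the increments of `f` by those of `g`. -/
theorem abs_sub_le_abs_sub_of_abs_deriv_le {D : Set ℝ} (hD : Convex ℝ D)
    {f g f' g' : ℝ → ℝ} (hf : ∀ x ∈ D, HasDerivAt f (f' x) x)
    (hg : ∀ x ∈ D, HasDerivAt g (g' x) x)
    (hle : ∀ x ∈ D, |f' x| ≤ g' x) {x y : ℝ} (hx : x ∈ D) (hy : y ∈ D) :
    |f x - f y| ≤ |g x - g y| := by
  wlog hxy : x ≤ y generalizing x y
  · rw [abs_sub_comm (f x), abs_sub_comm (g x)]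
    exact this hy hx (le_of_not_ge hxy)
  have hmono {u u' : ℝ → ℝ} (hu : ∀ x ∈ D, HasDerivAt u (u' x) x)
      (hu' : ∀ x ∈ D, 0 ≤ u' x) : MonotoneOn u D :=
    monotoneOn_of_hasDerivWithinAt_nonneg hD
      (fun x hx => (hu x hx).continuousAt.continuousWithinAt)
      (fun x hx => (hu x (interior_subset hx)).hasDerivWithinAt)
      fun x hx => hu' x (interior_subset hx)
  have hsub : MonotoneOn (fun x => g x - f x) D :=
    hmono (fun x hx => (hg x hx).sub (hf x hx))
      fun x hx => sub_nonneg.2 ((le_abs_self _).trans (hle x hx))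
  have hadd : MonotoneOn (fun x => g x + f x) D :=
    hmono (fun x hx => (hg x hx).add (hf x hx))
      fun x hx => by linarith [neg_abs_le (f' x), hle x hx]
  have h₁ := hsub hx hy hxy
  have h₂ := hadd hx hy hxy
  rw [abs_of_nonpos (by linarith : g x - g y ≤ 0), abs_le]
  constructor <;> linarith

theorem lipschitzOnWith_comp_invFunOn_of_dist_le {α β γ : Type*} [Nonempty α]
    [PseudoMetricSpace β] [PseudoMetricSpace γ] {K : NNReal} {φ : α → β} {h : α → γ}
    {s : Set α} (hh : ∀ x ∈ s, ∀ y ∈ s, dist (h x) (h y) ≤ K * dist (φ x) (φ y)) :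
    LipschitzOnWith K (h ∘ invFunOn φ s) (φ '' s) := by
  refine LipschitzOnWith.of_dist_le_mul fun w₁ hw₁ w₂ hw₂ => ?_
  have hw₁' : ∃ x ∈ s, φ x = w₁ := hw₁
  have hw₂' : ∃ x ∈ s, φ x = w₂ := hw₂
  simpa only [comp_apply, invFunOn_eq hw₁', invFunOn_eq hw₂'] using
    hh _ (invFunOn_mem hw₁') _ (invFunOn_mem hw₂')

theorem nonneg_of_abs_le_neg_mul {a b C : ℝ} (ha : a < 0) (hb : |b| ≤ -(C * a)) : 0 ≤ C := by
  nlinarith [abs_nonneg b]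

theorem abs_add_le_of_abs_le_neg_mul {a b C : ℝ} (ha : a < 0) (hb : |b| ≤ -(C * a)) :
    |a + b| ≤ -((1 + C) * a) :=
  calc |a + b| ≤ |a| + |b| := abs_add_le a b
    _ ≤ -a - C * a := by rw [abs_of_neg ha]; linarith
    _ = -((1 + C) * a) := by ring

section SecondOrder

variable {φ : ℝ → ℝ} {s : Set ℝ}

theorem ContDiffOn.hasDerivAt_id_mul_deriv (hφ : ContDiffOn ℝ 2 φ s) (hs : IsOpen s) {m : ℝ}
    (hm : m ∈ s) :
    HasDerivAt (fun x => x * deriv φ x) (deriv φ m + m * deriv (deriv φ) m) m := by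
  have hφ' : HasDerivAt (deriv φ) (deriv (deriv φ) m) m :=
    ((hφ.deriv_of_isOpen hs (m := 1) le_rfl).differentiableOn one_ne_zero).hasDerivAt
      (hs.mem_nhds hm)
  simpa using (hasDerivAt_id' m).fun_mul hφ'

/-- `(x φ'(x))' = φ' + x φ''` is bounded by `-(1 + C) φ'`, the derivative of `-(1 + C) φ`. -/
theorem ContDiffOn.abs_id_mul_deriv_sub_le (hφ : ContDiffOn ℝ 2 φ s) (hs : IsOpen s)
    (hs' : Convex ℝ s) {C : ℝ} (hφ' : ∀ m ∈ s, deriv φ m < 0)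
    (hφ'' : ∀ m ∈ s, |m * deriv (deriv φ) m| ≤ -(C * deriv φ m)) {x y : ℝ} (hx : x ∈ s)
    (hy : y ∈ s) :
    |x * deriv φ x - y * deriv φ y| ≤ (1 + C) * |φ x - φ y| := by
  have hC : 0 ≤ C := nonneg_of_abs_le_neg_mul (hφ' x hx) (hφ'' x hx)
  have hderiv : ∀ m ∈ s, HasDerivAt φ (deriv φ m) m := fun m hm =>
    (hφ.differentiableOn two_ne_zero).hasDerivAt (hs.mem_nhds hm)
  calc |x * deriv φ x - y * deriv φ y|
      ≤ |-((1 + C) * φ x) - -((1 + C) * φ y)| :=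
        abs_sub_le_abs_sub_of_abs_deriv_le hs' (fun m hm => hφ.hasDerivAt_id_mul_deriv hs hm)
          (fun m hm => ((hderiv m hm).const_mul (1 + C)).neg)
          (fun m hm => abs_add_le_of_abs_le_neg_mul (hφ' m hm) (hφ'' m hm)) hx hy
    _ = (1 + C) * |φ x - φ y| := by
        rw [neg_sub_neg, ← mul_sub, abs_mul, abs_of_nonneg (by linarith), abs_sub_comm]

end SecondOrder

theorem mphi_lipschitz_general (C₀ : ℝ) (φ : ℝ → ℝ)
    (hφ : ContDiffOn ℝ 2 φ (Ioi 0))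
    (hφ' : ∀ m : ℝ, 0 < m → deriv φ m < 0)
    (hφ'' : ∀ m : ℝ, 0 < m → |m * deriv (deriv φ) m| ≤ -(C₀ * deriv φ m)) :
    (∀ m₁ m₂ : ℝ, 0 < m₁ → 0 < m₂ →
      |m₁ * deriv φ m₁ - m₂ * deriv φ m₂| ≤ (1 + C₀) * |φ m₁ - φ m₂|) ∧
    LipschitzOnWith (Real.toNNReal (1 + C₀))
      (fun w => invFunOn φ (Ioi 0) w * deriv φ (invFunOn φ (Ioi 0) w))
      (φ '' Ioi 0) := by
  have hbound : ∀ m₁ m₂ : ℝ, 0 < m₁ → 0 < m₂ →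
      |m₁ * deriv φ m₁ - m₂ * deriv φ m₂| ≤ (1 + C₀) * |φ m₁ - φ m₂| :=
    fun _ _ h₁ h₂ => hφ.abs_id_mul_deriv_sub_le isOpen_Ioi (convex_Ioi 0) hφ' hφ'' h₁ h₂
  have hC₀ : 0 ≤ C₀ := nonneg_of_abs_le_neg_mul (hφ' 1 one_pos) (hφ'' 1 one_pos)
  refine ⟨hbound, lipschitzOnWith_comp_invFunOn_of_dist_le (h := fun m => m * deriv φ m)
    fun x hx y hy => ?_⟩
  rw [Real.dist_eq, Real.dist_eq, Real.coe_toNNReal _ (by linarith)]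
  exact hbound x y hx hy

/-- the one-dimensional Lipschitz lemma behind (HM2).  If
`φ' < 0` and `|mφ''(m)| ≤ −C₀φ'(m)` on `(0,∞)`, then
`|m₁φ'(m₁) − m₂φ'(m₂)| ≤ (1+C₀)|φ(m₁) − φ(m₂)|`; equivalently
`w ↦ φ⁻¹(w)·φ'(φ⁻¹(w))` is `(1+C₀)`-Lipschitz on the range of `φ`. -/
theorem mphi_lipschitz (C₀ : ℝ) (hC₀ : 0 < C₀) (φ : ℝ → ℝ)
    (hφ : ContDiffOn ℝ 2 φ (Ioi 0))
    (hφ' : ∀ m : ℝ, 0 < m → deriv φ m < 0)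
    (hφ'' : ∀ m : ℝ, 0 < m → |m * deriv (deriv φ) m| ≤ -(C₀ * deriv φ m)) :
    (∀ m₁ m₂ : ℝ, 0 < m₁ → 0 < m₂ →
      |m₁ * deriv φ m₁ - m₂ * deriv φ m₂| ≤ (1 + C₀) * |φ m₁ - φ m₂|) ∧
    LipschitzOnWith (Real.toNNReal (1 + C₀))
      (fun w => invFunOn φ (Ioi 0) w * deriv φ (invFunOn φ (Ioi 0) w))
      (φ '' Ioi 0) :=
  mphi_lipschitz_general C₀ φ hφ hφ' hφ''
end

section
/- Assume: H : 𝕋^d × ℝ^d × (0,∞) → ℝ is C² with H_m < 0; B : 𝕋^d × ℝ^d × (0,∞) → ℝ^d is C²; C₀ > 0; ψ, C̄ : (0,∞) → (0,∞) are continuous; m₀ : 𝕋^d → (0,∞) is continuous; and for all (x,m): (HM1 at p=0) −mH_m(x,0,m) ≤ C₀ψ(m) + C̄(m); (HM2) |mH_{mm}(x,0,m)| ≤ −C₀H_m(x,0,m); (B2 at p=0) |B_m(x,0,m)| ≤ C₀ψ(m); (BM at p=0) |B_{mm}(x,0,m)| ≤ −C₀H_m(x,0,m); and the normalization max_{m∈[min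 m₀, max m₀]}|H(x,0,m)| ≤ C₀ for every x. Then there exists a constant C > 0, depending only on C₀ and on the suprema of ψ and C̄ over [min m₀, max m₀], such that for all (x,m) ∈ 𝕋^d × (0,∞): |m H_m(x,0,m)| ≤ C(1 + |H(x,0,m)|) and |B_m(x,0,m)| ≤ C(1 + |H(x,0,m)|). -/
open Set Function MeasureTheory Filter
open scoped Topology

noncomputable section

namespace EMFG

variable {d : ℕ}

private lemma per_int' {α : Type*} {f : Ed d → α} (hf : XPeriodic f) (i : Fin d) :
    ∀ (k : ℤ) (x : Ed d), f (x + (k:ℝ) • EuclideanSpace.single i (1:ℝ)) = f x := by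
  intro k
  induction k using Int.induction_on with
  | zero => simp
  | succ n ih =>
      intro x
      have h1 := hf (x + (n:ℝ) • EuclideanSpace.single i (1:ℝ)) i
      have h2 : x + ((n:ℤ)+1:ℝ) • EuclideanSpace.single i (1:ℝ)
          = x + (n:ℝ) • EuclideanSpace.single i (1:ℝ) + EuclideanSpace.single i (1:ℝ) := by
        push_cast
        rw [add_smul, one_smul, add_assoc]
      rw [show (((n:ℤ)+1:ℤ):ℝ) = ((n:ℤ)+1:ℝ) by push_cast; ring, h2, h1]
      have := ih x
      push_cast at this ⊢
      exact this
  | pred n ih =>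
      intro x
      have h1 := hf (x + (-(n:ℝ)-1) • EuclideanSpace.single i (1:ℝ)) i
      have h2 : x + (-(n:ℝ)-1) • EuclideanSpace.single i (1:ℝ) + EuclideanSpace.single i (1:ℝ)
          = x + (-(n:ℝ)) • EuclideanSpace.single i (1:ℝ) := by
        rw [sub_smul, one_smul, add_assoc]
        abel
      rw [show ((-(n:ℤ)-1:ℤ):ℝ) = (-(n:ℝ)-1) by push_cast; ring]
      rw [h2] at h1
      rw [← h1]
      have := ih x
      push_cast at this ⊢
      exact this

private lemma per_lattice' {α : Type*} {f : Ed d → α} (hf : XPeriodic f) (n : Fin d → ℤ) :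
    ∀ x : Ed d, f (x + ∑ i, (n i : ℝ) • EuclideanSpace.single i (1:ℝ)) = f x := by
  suffices h : ∀ s : Finset (Fin d), ∀ x : Ed d,
      f (x + ∑ i ∈ s, (n i : ℝ) • EuclideanSpace.single i (1:ℝ)) = f x from h Finset.univ
  intro s
  induction s using Finset.induction_on with
  | empty => simp
  | insert _ _ hi ih =>
      intro x
      rename_i j s'
      rw [Finset.sum_insert hi, show x + ((n j : ℝ) • EuclideanSpace.single j (1:ℝ)
          + ∑ i ∈ s', (n i : ℝ) • EuclideanSpace.single i (1:ℝ))
          = (x + ∑ i ∈ s', (n i : ℝ) • EuclideanSpace.single i (1:ℝ))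
            + (n j : ℝ) • EuclideanSpace.single j (1:ℝ) by abel]
      rw [per_int' hf j (n j), ih]

private lemma bddAbove_range_per' {m₀ : Ed d → ℝ} (hc : Continuous m₀) (hp : XPeriodic m₀) :
    BddAbove (range m₀) := by
  set K : Set (Ed d) := {x | ∀ i, x i ∈ Icc (0:ℝ) 1} with hK
  have hKcl : IsClosed K := by
    have : K = ⋂ i, (fun x : Ed d => x i) ⁻¹' Icc (0:ℝ) 1 := by
      ext x; simp [hK]
    rw [this]
    exact isClosed_iInter fun i => isClosed_Icc.preimage (EuclideanSpace.proj i).continuous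
  have hKb : K ⊆ Metric.closedBall 0 (Real.sqrt d) := by
    intro x hx
    simp only [Metric.mem_closedBall, dist_zero_right]
    rw [EuclideanSpace.norm_eq]
    apply Real.sqrt_le_sqrt
    calc ∑ i, ‖x i‖ ^ 2 ≤ ∑ _i : Fin d, (1:ℝ) := by
          apply Finset.sum_le_sum
          intro i _
          have hxi := hx i
          have h0 : |x i| ≤ 1 := abs_le.mpr ⟨by linarith [hxi.1], hxi.2⟩
          calc ‖x i‖^2 = |x i|^2 := rfl
            _ ≤ 1^2 := pow_le_pow_left₀ (abs_nonneg _) h0 2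
            _ = 1 := one_pow 2
      _ = d := by simp
  have hKc : IsCompact K :=
    (isCompact_closedBall (0 : Ed d) (Real.sqrt d)).of_isClosed_subset hKcl hKb
  have himg : range m₀ ⊆ m₀ '' K := by
    rintro _ ⟨x, rfl⟩
    refine ⟨x + ∑ i, ((-⌊x i⌋ : ℤ) : ℝ) • EuclideanSpace.single i (1:ℝ), ?_, per_lattice' hp _ x⟩
    intro i
    have hsum : (∑ j, ((-⌊x j⌋ : ℤ) : ℝ) • EuclideanSpace.single j (1:ℝ)) i
        = ∑ j, (((-⌊x j⌋ : ℤ) : ℝ) • EuclideanSpace.single j (1:ℝ)) i := by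
      have := map_sum (EuclideanSpace.proj (𝕜 := ℝ) i)
        (fun j : Fin d => ((-⌊x j⌋ : ℤ) : ℝ) • EuclideanSpace.single j (1:ℝ)) Finset.univ
      simpa using this
    have hcoord : (x + ∑ j, ((-⌊x j⌋ : ℤ) : ℝ) • EuclideanSpace.single j (1:ℝ)) i
        = x i - ⌊x i⌋ := by
      rw [PiLp.add_apply, hsum]
      simp only [PiLp.smul_apply, EuclideanSpace.single_apply, smul_eq_mul, mul_ite, mul_one,
        mul_zero, Finset.sum_ite_eq, Finset.mem_univ, if_true]
      push_cast
      ring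
    rw [hcoord]
    constructor
    · linarith [Int.floor_le (x i)]
    · linarith [Int.lt_floor_add_one (x i)]
  exact ((hKc.image hc).bddAbove).mono himg

private lemma mvt_aux' {a b : ℝ} (hab : a ≤ b) {f g f' g' : ℝ → ℝ}
    (hf : ∀ t ∈ Icc a b, HasDerivAt f (f' t) t)
    (hg : ∀ t ∈ Icc a b, HasDerivAt g (g' t) t)
    (hb : ∀ t ∈ Icc a b, |f' t| ≤ g' t) :
    |f b - f a| ≤ g b - g a := by
  have hmem : ∀ t, t ∈ interior (Icc a b) → t ∈ Icc a b := fun t ht => interior_subset ht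
  have key : ∀ (φ φ' : ℝ → ℝ), (∀ t ∈ Icc a b, HasDerivAt φ (φ' t) t) →
      (∀ t ∈ Icc a b, 0 ≤ φ' t) → φ a ≤ φ b := by
    intro φ φ' hφ hφ'
    have hmono : MonotoneOn φ (Icc a b) := by
      apply monotoneOn_of_deriv_nonneg (convex_Icc a b)
      · exact fun t ht => (hφ t ht).continuousAt.continuousWithinAt
      · intro t ht
        exact ((hφ t (hmem t ht)).differentiableAt).differentiableWithinAt
      · intro t ht
        rw [(hφ t (hmem t ht)).deriv]
        exact hφ' t (hmem t ht)
    exact hmono (left_mem_Icc.mpr hab) (right_mem_Icc.mpr hab) hab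
  have h1 : (fun t => g t - f t) a ≤ (fun t => g t - f t) b := by
    apply key _ (fun t => g' t - f' t) (fun t ht => (hg t ht).sub (hf t ht))
    intro t ht
    have := abs_le.mp (hb t ht)
    linarith [this.2]
  have h2 : (fun t => g t + f t) a ≤ (fun t => g t + f t) b := by
    apply key _ (fun t => g' t + f' t) (fun t ht => (hg t ht).add (hf t ht))
    intro t ht
    have := abs_le.mp (hb t ht)
    linarith [this.1]
  simp only at h1 h2
  rw [abs_le]
  constructor <;> linarith

private lemma curve_cd' {E : Type*} [NormedAddCommGroup E] [NormedSpace ℝ E]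
    {F : Ed d → Ed d → ℝ → E}
    (hF : ContDiffOn ℝ 2 (fun z : Ed d × Ed d × ℝ => F z.1 z.2.1 z.2.2)
      (univ ×ˢ univ ×ˢ Ioi 0)) (x : Ed d) :
    ContDiffOn ℝ 2 (fun m => F x 0 m) (Ioi 0) := by
  have h := hF.comp (f := fun m : ℝ => ((x, ((0:Ed d), m)) : Ed d × Ed d × ℝ))
    ((contDiff_const.prodMk (contDiff_const.prodMk contDiff_id)).contDiffOn)
    (fun m hm => by simp only [Set.mem_prod, Set.mem_univ, true_and]; exact hm)
  exact h

private lemma d1' {E : Type*} [NormedAddCommGroup E] [NormedSpace ℝ E]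
    {f : ℝ → E} (h : ContDiffOn ℝ 2 f (Ioi 0)) {t : ℝ} (ht : 0 < t) :
    HasDerivAt f (deriv f t) t :=
  (((h.contDiffAt (isOpen_Ioi.mem_nhds ht)).differentiableAt (by norm_num))).hasDerivAt

private lemma d2' {E : Type*} [NormedAddCommGroup E] [NormedSpace ℝ E]
    {f : ℝ → E} (h : ContDiffOn ℝ 2 f (Ioi 0)) {t : ℝ} (ht : 0 < t) :
    HasDerivAt (deriv f) (deriv (deriv f) t) t := by
  have h1 : ContDiffOn ℝ 1 (deriv f) (Ioi 0) :=
    h.deriv_of_isOpen isOpen_Ioi (by norm_num)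
  exact ((h1.contDiffAt (isOpen_Ioi.mem_nhds ht)).differentiableAt (by norm_num)).hasDerivAt

/-- the displayed claim in the proof of Lemma 3.1: the bounds
`|mH_m(x,0,m)| ≤ C(1+|H(x,0,m)|)` and `|B_m(x,0,m)| ≤ C(1+|H(x,0,m)|)`, with `C`
depending only on `C₀` and on a bound `Λ` for the suprema of `ψ` and `C̄` over
`[min m₀, max m₀]`. -/
theorem mHm_Bm_bounds (C₀ Λ : ℝ) (hC₀ : 0 < C₀) :
    ∃ C : ℝ, 0 < C ∧
    ∀ (d : ℕ) (H : Ed d → Ed d → ℝ → ℝ) (B : Ed d → Ed d → ℝ → Ed d)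
      (ψ Cb : ℝ → ℝ) (m₀ : Ed d → ℝ),
      ContDiffOn ℝ 2 (fun z : Ed d × Ed d × ℝ => H z.1 z.2.1 z.2.2)
        (univ ×ˢ univ ×ˢ Ioi 0) →
      ContDiffOn ℝ 2 (fun z : Ed d × Ed d × ℝ => B z.1 z.2.1 z.2.2)
        (univ ×ˢ univ ×ˢ Ioi 0) →
      (∀ (x p : Ed d) (m : ℝ), 0 < m → dm H x p m < 0) →
      ContinuousOn ψ (Ioi 0) → ContinuousOn Cb (Ioi 0) →
      (∀ m : ℝ, 0 < m → 0 < ψ m ∧ 0 < Cb m) →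
      Continuous m₀ → (∀ x, 0 < m₀ x) → XPeriodic m₀ →
      (∀ (x : Ed d) (m : ℝ), 0 < m → -(m * dm H x 0 m) ≤ C₀ * ψ m + Cb m) →
      (∀ (x : Ed d) (m : ℝ), 0 < m → |m * dmm H x 0 m| ≤ -(C₀ * dm H x 0 m)) →
      (∀ (x : Ed d) (m : ℝ), 0 < m → ‖vdm B x 0 m‖ ≤ C₀ * ψ m) →
      (∀ (x : Ed d) (m : ℝ), 0 < m → ‖vdmm B x 0 m‖ ≤ -(C₀ * dm H x 0 m)) →
      (∀ (x : Ed d) (m : ℝ), m ∈ Icc (⨅ y, m₀ y) (⨆ y, m₀ y) → |H x 0 m| ≤ C₀) →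
      (∀ m : ℝ, m ∈ Icc (⨅ y, m₀ y) (⨆ y, m₀ y) → ψ m ≤ Λ ∧ Cb m ≤ Λ) →
      ∀ (x : Ed d) (m : ℝ), 0 < m →
        |m * dm H x 0 m| ≤ C * (1 + |H x 0 m|) ∧
        ‖vdm B x 0 m‖ ≤ C * (1 + |H x 0 m|) := by
  refine ⟨(1+C₀) * (1 + C₀ + max Λ 0) + 1, ?_, ?_⟩
  · have h1 : (0:ℝ) < 1 + C₀ := by linarith
    have h2 : (0:ℝ) < 1 + C₀ + max Λ 0 := by
      have := le_max_right Λ (0:ℝ); linarith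
    nlinarith [mul_pos h1 h2]
  intro d H B ψ Cb m₀ hHsm hBsm hHmneg hψc hCbc hposc hm₀c hm₀pos hm₀per hHM1 hHM2 hB2 hBM
    hHn hΛ x m hm
  set C : ℝ := (1+C₀) * (1 + C₀ + max Λ 0) + 1 with hCdef
  set K : ℝ := max Λ 0 with hKdef
  have hK0 : 0 ≤ K := le_max_right _ _
  set μ : ℝ := m₀ 0 with hμdef
  have hμ : 0 < μ := hm₀pos 0
  have hbb : BddBelow (range m₀) := ⟨0, by rintro v ⟨y, rfl⟩; exact (hm₀pos y).le⟩
  have hba : BddAbove (range m₀) := bddAbove_range_per' hm₀c hm₀per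
  have hmemμ : μ ∈ Icc (⨅ y, m₀ y) (⨆ y, m₀ y) := ⟨ciInf_le hbb 0, le_ciSup hba 0⟩
  have hHμ : |H x 0 μ| ≤ C₀ := hHn x μ hmemμ
  have hψμ : ψ μ ≤ K := le_trans (hΛ μ hmemμ).1 (le_max_left _ _)
  have hCbμ : Cb μ ≤ K := le_trans (hΛ μ hmemμ).2 (le_max_left _ _)
  have hcH : ContDiffOn ℝ 2 (fun m' => H x 0 m') (Ioi 0) := curve_cd' hHsm x
  have hcB : ContDiffOn ℝ 2 (fun m' => B x 0 m') (Ioi 0) := curve_cd' hBsm x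
  set a : ℝ := min m μ with hadef
  set b : ℝ := max m μ with hbdef
  have hab : a ≤ b := min_le_max
  have hsub : ∀ t ∈ Icc a b, (0:ℝ) < t := fun t ht => lt_of_lt_of_le (lt_min hm hμ) ht.1
  have hA0 : 0 ≤ |H x 0 m| := abs_nonneg _
  -- difference of endpoint values of H
  have hXY : ∀ X Y : ℝ, X - Y ≤ |X| + |Y| := fun X Y => by
    have := le_abs_self X; have := neg_abs_le Y; linarith
  have hHab : H x 0 a - H x 0 b ≤ |H x 0 m| + C₀ := by
    rcases le_total m μ with h | h
    · rw [hadef, hbdef, min_eq_left h, max_eq_right h]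
      have := hXY (H x 0 m) (H x 0 μ); linarith
    · rw [hadef, hbdef, min_eq_right h, max_eq_left h]
      have := hXY (H x 0 μ) (H x 0 m)
      have h2 := le_abs_self (H x 0 μ); linarith
  -- derivative facts
  have hder1 : ∀ t ∈ Icc a b, HasDerivAt (fun s => H x 0 s) (dm H x 0 t) t :=
    fun t ht => d1' hcH (hsub t ht)
  have hder2 : ∀ t ∈ Icc a b, HasDerivAt (fun s => dm H x 0 s) (dmm H x 0 t) t := by
    intro t ht
    have := d2' hcH (hsub t ht)
    exact this
  have hderB : ∀ t ∈ Icc a b, HasDerivAt (fun s => vdm B x 0 s) (vdmm B x 0 t) t := by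
    intro t ht
    have := d2' hcB (hsub t ht)
    exact this
  -- Part A : the bound on |m H_m|
  have hFder : ∀ t ∈ Icc a b, HasDerivAt (fun s => s * dm H x 0 s)
      (1 * dm H x 0 t + t * dmm H x 0 t) t := by
    intro t ht
    exact (hasDerivAt_id t).mul (hder2 t ht)
  have hgder : ∀ t ∈ Icc a b, HasDerivAt (fun s => -((1+C₀) * H x 0 s))
      (-((1+C₀) * dm H x 0 t)) t := by
    intro t ht
    exact ((hder1 t ht).const_mul (1+C₀)).neg
  have hbound : ∀ t ∈ Icc a b, |1 * dm H x 0 t + t * dmm H x 0 t|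
      ≤ -((1+C₀) * dm H x 0 t) := by
    intro t ht
    have ht0 := hsub t ht
    have h1 := hHM2 x t ht0
    have h2 : dm H x 0 t < 0 := hHmneg x 0 t ht0
    have h3 := abs_add_le (dm H x 0 t) (t * dmm H x 0 t)
    rw [abs_of_neg h2] at h3
    rw [one_mul]
    calc |dm H x 0 t + t * dmm H x 0 t| ≤ -dm H x 0 t + |t * dmm H x 0 t| := h3
      _ ≤ -dm H x 0 t + -(C₀ * dm H x 0 t) := by linarith
      _ = -((1+C₀) * dm H x 0 t) := by ring
  have hmvtA := mvt_aux' hab hFder hgder hbound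
  have hdiffA : |m * dm H x 0 m - μ * dm H x 0 μ| ≤ (1+C₀) * (|H x 0 m| + C₀) := by
    have hrhs : -((1+C₀) * H x 0 b) - -((1+C₀) * H x 0 a)
        = (1+C₀) * (H x 0 a - H x 0 b) := by ring
    rw [hrhs] at hmvtA
    have hHab' := hHab
    rcases le_total m μ with h | h
    · rw [hadef, hbdef, min_eq_left h, max_eq_right h] at hmvtA hHab'
      have hle : (1+C₀) * (H x 0 m - H x 0 μ) ≤ (1+C₀) * (|H x 0 m| + C₀) :=
        mul_le_mul_of_nonneg_left hHab' (by linarith)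
      rw [abs_sub_comm]
      linarith
    · rw [hadef, hbdef, min_eq_right h, max_eq_left h] at hmvtA hHab'
      have hle : (1+C₀) * (H x 0 μ - H x 0 m) ≤ (1+C₀) * (|H x 0 m| + C₀) :=
        mul_le_mul_of_nonneg_left hHab' (by linarith)
      linarith
  have hfμ : |μ * dm H x 0 μ| ≤ C₀ * K + K := by
    have hneg : μ * dm H x 0 μ < 0 := mul_neg_of_pos_of_neg hμ (hHmneg x 0 μ hμ)
    rw [abs_of_neg hneg]
    have h1 := hHM1 x μ hμ
    have h2 : C₀ * ψ μ ≤ C₀ * K := mul_le_mul_of_nonneg_left hψμ hC₀.le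
    linarith
  constructor
  · have htri : |m * dm H x 0 m| ≤ |μ * dm H x 0 μ| + |m * dm H x 0 m - μ * dm H x 0 μ| := by
      have := abs_add_le (μ * dm H x 0 μ) (m * dm H x 0 m - μ * dm H x 0 μ)
      simpa using this
    have hCsplit : C = (1+C₀) * (1 + C₀ + K) + 1 := by rw [hCdef, hKdef]
    nlinarith [mul_nonneg (by linarith : (0:ℝ) ≤ 1 + C₀) hA0]
  -- Part B : the bound on ‖B_m‖
  · by_cases hw : vdm B x 0 m - vdm B x 0 μ = 0
    · have heq : vdm B x 0 m = vdm B x 0 μ := by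
        have := sub_eq_zero.mp hw; exact this
      rw [heq]
      have h1 := hB2 x μ hμ
      have h2 : C₀ * ψ μ ≤ C₀ * K := mul_le_mul_of_nonneg_left hψμ hC₀.le
      have hCsplit : C = (1+C₀) * (1 + C₀ + K) + 1 := by rw [hCdef, hKdef]
      nlinarith [mul_nonneg hC₀.le hA0, mul_nonneg hC₀.le hK0,
        mul_nonneg (mul_nonneg hC₀.le hC₀.le) hA0, mul_nonneg hK0 hA0]
    · set w : Ed d := vdm B x 0 m - vdm B x 0 μ with hwdef
      set v : Ed d := ‖w‖⁻¹ • w with hvdef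
      have hwn : 0 < ‖w‖ := norm_pos_iff.mpr hw
      have hvn : ‖v‖ = 1 := norm_smul_inv_norm hw
      have hvw : (inner ℝ v w : ℝ) = ‖w‖ := by
        rw [hvdef, real_inner_smul_left, real_inner_self_eq_norm_sq]
        field_simp
      have hfder : ∀ t ∈ Icc a b, HasDerivAt (fun s => (inner ℝ v (vdm B x 0 s) : ℝ))
          ((inner ℝ v (vdmm B x 0 t) : ℝ)) t := by
        intro t ht
        simpa using (hasDerivAt_const t v).inner ℝ (hderB t ht)
      have hgder' : ∀ t ∈ Icc a b, HasDerivAt (fun s => -(C₀ * H x 0 s))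
          (-(C₀ * dm H x 0 t)) t := by
        intro t ht
        exact ((hder1 t ht).const_mul C₀).neg
      have hbound' : ∀ t ∈ Icc a b, |(inner ℝ v (vdmm B x 0 t) : ℝ)|
          ≤ -(C₀ * dm H x 0 t) := by
        intro t ht
        have ht0 := hsub t ht
        calc |(inner ℝ v (vdmm B x 0 t) : ℝ)| ≤ ‖v‖ * ‖vdmm B x 0 t‖ :=
              abs_real_inner_le_norm _ _
          _ = ‖vdmm B x 0 t‖ := by rw [hvn, one_mul]
          _ ≤ -(C₀ * dm H x 0 t) := hBM x t ht0
      have hmvtB := mvt_aux' hab hfder hgder' hbound'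
      have hrhs : -(C₀ * H x 0 b) - -(C₀ * H x 0 a) = C₀ * (H x 0 a - H x 0 b) := by ring
      rw [hrhs] at hmvtB
      have hinn : (inner ℝ v (vdm B x 0 b) : ℝ) - (inner ℝ v (vdm B x 0 a) : ℝ)
          = (inner ℝ v (vdm B x 0 b - vdm B x 0 a) : ℝ) := (inner_sub_right _ _ _).symm
      have hwle : ‖w‖ ≤ C₀ * (|H x 0 m| + C₀) := by
        rw [hinn] at hmvtB
        have hHab' := hHab
        rcases le_total m μ with h | h
        · rw [hadef, hbdef, min_eq_left h, max_eq_right h] at hmvtB hHab'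
          have hle : C₀ * (H x 0 m - H x 0 μ) ≤ C₀ * (|H x 0 m| + C₀) :=
            mul_le_mul_of_nonneg_left hHab' hC₀.le
          have hsub' : vdm B x 0 μ - vdm B x 0 m = -w := by rw [hwdef]; abel
          rw [hsub', inner_neg_right, abs_neg, hvw, abs_of_nonneg hwn.le] at hmvtB
          linarith
        · rw [hadef, hbdef, min_eq_right h, max_eq_left h] at hmvtB hHab'
          have hle : C₀ * (H x 0 μ - H x 0 m) ≤ C₀ * (|H x 0 m| + C₀) :=
            mul_le_mul_of_nonneg_left hHab' hC₀.le
          have hsub' : vdm B x 0 m - vdm B x 0 μ = w := rfl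
          rw [hsub', hvw, abs_of_nonneg hwn.le] at hmvtB
          linarith
      have htri : ‖vdm B x 0 m‖ ≤ ‖vdm B x 0 μ‖ + ‖w‖ := by
        have := norm_add_le (vdm B x 0 μ) w
        have heq : vdm B x 0 μ + w = vdm B x 0 m := by rw [hwdef]; abel
        rw [heq] at this
        exact this
      have hBμ : ‖vdm B x 0 μ‖ ≤ C₀ * K := by
        have h1 := hB2 x μ hμ
        have h2 : C₀ * ψ μ ≤ C₀ * K := mul_le_mul_of_nonneg_left hψμ hC₀.le
        linarith
      have hCsplit : C = (1+C₀) * (1 + C₀ + K) + 1 := by rw [hCdef, hKdef]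
      nlinarith [mul_nonneg hC₀.le hA0]

end EMFG
end
end

section
/- Let d ≥ 1, 0 < α < 2, c₀ ≥ 0, let f : (0,∞) → ℝ be differentiable with f′(m) > 0 for all m > 0, and let V : 𝕋^d → ℝ. Define the congestion Hamiltonian H(x,p,m) = |p|²/(2(m+c₀)^α) − V(x) − f(m) and the congestion drift B(x,p,m) = m p/(m+c₀)^α. Then the Lions–Souganidis uniqueness condition holds strictly: for every x ∈ 𝕋^d, p ∈ ℝ^d, m > 0, and every ξ ∈ ℝ^d with ξ ≠ 0, one has −4 H_m(x,p,m) · ξᵀD_pB(x,p,m)ξ > ( (B_m(x,p,m) − D_pH(x,p,m))·ξ )². Explicitly: 2αm|p|²|ξ|²/(m+c₀)^{2α+1} + 4f′(m)m|ξ|²/(m+c₀)^α > α²m²(p·ξ)²/(m+c₀)^{2α+2}. -/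
/-
`B_m − D_pH = −α m p/(m+c₀)^{α+1}` is parallel to `p`, so by Cauchy–Schwarz
`((B_m − D_pH)·ξ)² ≤ α² m² |p|² |ξ|²/(m+c₀)^{2α+2}`. Since
`m ≤ m + c₀` and `α ≤ 2`, this is bounded by the `|p|²`-part `2α m |p|² |ξ|²/(m+c₀)^{2α+1}`
of `−4 H_m ξᵀ D_pB ξ`; the remaining part `4 f′(m) m |ξ|²/(m+c₀)^α` is positive and makes
the inequality strict.
-/
open Set Function MeasureTheory Filter
open scoped Topology

noncomputable section

namespace EMFG

/-- The congestion Hamiltonian `H(x,p,m) = |p|²/(2(m+c₀)^α) − V(x) − f(m)`. -/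
def congH {d : ℕ} (α c₀ : ℝ) (V : Ed d → ℝ) (f : ℝ → ℝ) :
    Ed d → Ed d → ℝ → ℝ :=
  fun x p m => ‖p‖ ^ 2 / (2 * (m + c₀) ^ α) - V x - f m

/-- The congestion drift `B(x,p,m) = m p/(m+c₀)^α`. -/
def congB {d : ℕ} (α c₀ : ℝ) : Ed d → Ed d → ℝ → Ed d :=
  fun _ p m => (m / (m + c₀) ^ α) • p

lemma rpow_two_mul_add {s : ℝ} (hs : 0 < s) (α β : ℝ) :
    s ^ (2 * α + β) = (s ^ α) ^ 2 * s ^ β := by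
  rw [Real.rpow_add hs, mul_comm 2 α, Real.rpow_mul hs.le, Real.rpow_two]

lemma hasDerivAt_add_const_rpow {c m : ℝ} (hs : 0 < m + c) (α : ℝ) :
    HasDerivAt (fun m' => (m' + c) ^ α) (α * (m + c) ^ α / (m + c)) m := by
  convert (hasDerivAt_id' m |>.add_const c).rpow_const (p := α) (Or.inl hs.ne') using 1
  rw [Real.rpow_sub_one hs.ne']
  ring

section Congestion

variable {d : ℕ} (α c₀ : ℝ) (x p : Ed d) {m : ℝ}

lemma gradp_congH (V : Ed d → ℝ) (f : ℝ → ℝ) :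
    gradp (congH α c₀ V f) x p m = ((m + c₀) ^ α)⁻¹ • p := by
  have hsq : HasFDerivAt (fun p' : Ed d => ‖p'‖ ^ 2) (2 • innerSL ℝ p) p := by
    simpa using (hasFDerivAt_id p).norm_sq
  have h : HasFDerivAt (fun p' => congH α c₀ V f x p' m)
      ((2 * (m + c₀) ^ α)⁻¹ • 2 • innerSL ℝ p) p := by
    simp only [congH, div_eq_mul_inv]
    exact ((hsq.mul_const (2 * (m + c₀) ^ α)⁻¹).sub_const (V x)).sub_const (f m)
  rw [gradp, h.hasGradientAt.gradient, LinearIsometryEquiv.symm_apply_eq]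
  ext y
  simp only [mul_inv_rev, smul_apply, coe_innerSL_apply, nsmul_eq_mul, Nat.cast_ofNat,
    smul_eq_mul, map_smul, InnerProductSpace.toDual_apply_apply]
  field_simp

lemma dm_congH (V : Ed d → ℝ) {f f' : ℝ → ℝ} (hf : HasDerivAt f (f' m) m)
    (hs : 0 < m + c₀) :
    dm (congH α c₀ V f) x p m = -(α * ‖p‖ ^ 2 / (2 * ((m + c₀) ^ α * (m + c₀)))) - f' m := by
  have hA : 0 < (m + c₀) ^ α := Real.rpow_pos_of_pos hs α
  have h : HasDerivAt (fun m' => congH α c₀ V f x p m') _ m :=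
    ((((hasDerivAt_add_const_rpow hs α).const_mul 2).inv (by positivity)).const_mul
      (‖p‖ ^ 2)).sub_const (V x) |>.sub hf
  rw [dm, h.deriv]
  field_simp

lemma vdm_congB (hs : 0 < m + c₀) :
    vdm (congB α c₀) x p m = (((m + c₀) ^ α)⁻¹ - α * m / ((m + c₀) ^ α * (m + c₀))) • p := by
  have hA : 0 < (m + c₀) ^ α := Real.rpow_pos_of_pos hs α
  have h : HasDerivAt (fun m' => congB α c₀ x p m') _ m :=
    ((hasDerivAt_id' m).div (hasDerivAt_add_const_rpow hs α) hA.ne').smul_const p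
  rw [vdm, h.deriv]
  congr 1
  field_simp

lemma jacp_congB (ξ : Ed d) : jacp (congB α c₀) x p m ξ = (m / (m + c₀) ^ α) • ξ := by
  have h : HasFDerivAt (𝕜 := ℝ) (fun p' => congB α c₀ x p' m) _ p :=
    (hasFDerivAt_id p).const_smul (m / (m + c₀) ^ α)
  rw [jacp, h.fderiv]
  rfl

lemma vdm_congB_sub_gradp_congH (V : Ed d → ℝ) (f : ℝ → ℝ) (hs : 0 < m + c₀) :
    vdm (congB α c₀) x p m - gradp (congH α c₀ V f) x p m =
      -(α * m / ((m + c₀) ^ α * (m + c₀))) • p := by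
  rw [vdm_congB α c₀ x p hs, gradp_congH, ← sub_smul]
  congr 1
  ring

end Congestion

lemma sq_mul_sq_mul_sq_le_of_le_two {α m s t P X : ℝ} (hα : 0 ≤ α) (hα2 : α ≤ 2)
    (hm : 0 ≤ m) (hms : m ≤ s) (ht : t ^ 2 ≤ P * X) :
    α ^ 2 * m ^ 2 * t ^ 2 ≤ 2 * α * m * s * (P * X) :=
  calc α ^ 2 * m ^ 2 * t ^ 2 = (α * m) * (α * m) * t ^ 2 := by ring
    _ ≤ (α * m) * (2 * s) * (P * X) := by
      have hs : 0 ≤ s := hm.trans hms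
      gcongr
    _ = 2 * α * m * s * (P * X) := by ring

-- In the application `s = m + c₀`, `A = s ^ α`, `F = f′(m)`, `t = p·ξ`, `P = |p|²`, `X = |ξ|²`.
lemma congestion_explicit_ineq {α m s A F t P X : ℝ} (hα : 0 ≤ α) (hα2 : α ≤ 2) (hm : 0 < m)
    (hms : m ≤ s) (hA : 0 < A) (hF : 0 < F) (hX : 0 < X) (ht : t ^ 2 ≤ P * X) :
    α ^ 2 * m ^ 2 * t ^ 2 / (A ^ 2 * s ^ 2) <
      2 * α * m * P * X / (A ^ 2 * s) + 4 * F * m * X / A := by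
  have hs : 0 < s := hm.trans_le hms
  calc α ^ 2 * m ^ 2 * t ^ 2 / (A ^ 2 * s ^ 2) = α ^ 2 * m ^ 2 * t ^ 2 / s / (A ^ 2 * s) := by
        field_simp
    _ ≤ 2 * α * m * P * X / (A ^ 2 * s) := by
        gcongr
        rw [div_le_iff₀ hs]
        linarith [sq_mul_sq_mul_sq_le_of_le_two hα hα2 hm.le hms ht]
    _ < _ := lt_add_of_pos_right _ (by positivity)

theorem congestion_uniqueness_condition_general (d : ℕ) (α c₀ : ℝ)
    (hα0 : 0 < α) (hα2 : α < 2) (hc₀ : 0 ≤ c₀)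
    (f f' : ℝ → ℝ) (hf : ∀ m : ℝ, 0 < m → HasDerivAt f (f' m) m)
    (hf' : ∀ m : ℝ, 0 < m → 0 < f' m) (V : Ed d → ℝ) :
    ∀ (x p : Ed d) (m : ℝ), 0 < m → ∀ ξ : Ed d, ξ ≠ 0 →
      ((dotE (vdm (congB α c₀) x p m - gradp (congH α c₀ V f) x p m) ξ) ^ 2 <
        -(4 * dm (congH α c₀ V f) x p m) * dotE (jacp (congB α c₀) x p m ξ) ξ) ∧
      (α ^ 2 * m ^ 2 * (dotE p ξ) ^ 2 / (m + c₀) ^ (2 * α + 2) <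
        2 * α * m * ‖p‖ ^ 2 * ‖ξ‖ ^ 2 / (m + c₀) ^ (2 * α + 1) +
          4 * f' m * m * ‖ξ‖ ^ 2 / (m + c₀) ^ α) := by
  intro x p m hm ξ hξ
  have hs : 0 < m + c₀ := by linarith
  have hA : 0 < (m + c₀) ^ α := Real.rpow_pos_of_pos hs α
  have cauchy_schwarz : dotE p ξ ^ 2 ≤ ‖p‖ ^ 2 * ‖ξ‖ ^ 2 := by
    simpa only [sq, dotE, real_inner_self_eq_norm_sq] using real_inner_mul_inner_self_le p ξ
  have key := congestion_explicit_ineq hα0.le hα2.le hm (le_add_of_nonneg_right hc₀) hA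
    (hf' m hm) (pow_pos (norm_pos_iff.mpr hξ) 2) cauchy_schwarz
  refine ⟨?_, ?_⟩
  · rw [vdm_congB_sub_gradp_congH α c₀ x p V f hs, dm_congH α c₀ x p V (hf m hm) hs,
      jacp_congB]
    simp only [dotE, real_inner_smul_left, real_inner_self_eq_norm_sq] at key ⊢
    convert key using 1
    · field_simp
    · field_simp
      ring
  · rwa [rpow_two_mul_add hs, rpow_two_mul_add hs, Real.rpow_one, Real.rpow_two]

/-- for `0 < α < 2`, `c₀ ≥ 0` and `f' > 0`, the congestion model
satisfies the strict Lions–Souganidis uniqueness condition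
`−4H_m D_pB > (B_m − D_pH)⊗(B_m − D_pH)`. -/
theorem congestion_uniqueness_condition (d : ℕ) (hd : 1 ≤ d) (α c₀ : ℝ)
    (hα0 : 0 < α) (hα2 : α < 2) (hc₀ : 0 ≤ c₀)
    (f f' : ℝ → ℝ) (hf : ∀ m : ℝ, 0 < m → HasDerivAt f (f' m) m)
    (hf' : ∀ m : ℝ, 0 < m → 0 < f' m) (V : Ed d → ℝ) :
    ∀ (x p : Ed d) (m : ℝ), 0 < m → ∀ ξ : Ed d, ξ ≠ 0 →
      ((dotE (vdm (congB α c₀) x p m - gradp (congH α c₀ V f) x p m) ξ) ^ 2 <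
        -(4 * dm (congH α c₀ V f) x p m) * dotE (jacp (congB α c₀) x p m ξ) ξ) ∧
      (α ^ 2 * m ^ 2 * (dotE p ξ) ^ 2 / (m + c₀) ^ (2 * α + 2) <
        2 * α * m * ‖p‖ ^ 2 * ‖ξ‖ ^ 2 / (m + c₀) ^ (2 * α + 1) +
          4 * f' m * m * ‖ξ‖ ^ 2 / (m + c₀) ^ α) :=
  congestion_uniqueness_condition_general d α c₀ hα0 hα2 hc₀ f f' hf hf' V

end EMFG
end
end
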